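/- arXiv:2512.21267 — 11 statements merged into one kernel-verified Lean document; each statement's English description precedes it below -/
import Mathlib

section
/- Let x : ℝ → ℝ⁸ be a solution of the system on [a,b] such that at every η ∈ [a,b] the conservation law G − 1 + 2R₁ + 2R₂ + 2R₃ + R₄ = 0 holds at x(η) (with G, Rᵢ evaluated at x(η)). If 2X₁ + 2X₂ + 2X₃ + X₄ = 1 holds at x(η₀) for some η₀ ∈ [a,b], then 2X₁ + 2X₂ + 2X₃ + X₄ = 1 holds at x(η) for every η ∈ [a,b]. (Invariance of the trace constraint, eqn (2.10) of the paper.) -/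
noncomputable section

namespace Spin7

/-- Δ = k² + k·l + l², as a real number. -/
def Δ (k l : ℕ) : ℝ := (k : ℝ)^2 + (k : ℝ) * (l : ℝ) + (l : ℝ)^2

/-- G = 2X₁² + 2X₂² + 2X₃² + X₄², where (X₁,X₂,X₃,X₄,Z₁,Z₂,Z₃,Z₄) = (p 0,…,p 7). -/
def G (p : Fin 8 → ℝ) : ℝ := 2*(p 0)^2 + 2*(p 1)^2 + 2*(p 2)^2 + (p 3)^2

def R1 (k l : ℕ) (p : Fin 8 → ℝ) : ℝ :=
  6*(p 5)*(p 6) + (p 4)^2 - (p 5)^2 - (p 6)^2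
    - ((k : ℝ) + (l : ℝ))^2/(2*(Δ k l)^2)*(p 5)^2*(p 6)^2*(p 7)^2

def R2 (k l : ℕ) (p : Fin 8 → ℝ) : ℝ :=
  6*(p 4)*(p 6) + (p 5)^2 - (p 6)^2 - (p 4)^2
    - (l : ℝ)^2/(2*(Δ k l)^2)*(p 4)^2*(p 6)^2*(p 7)^2

def R3 (k l : ℕ) (p : Fin 8 → ℝ) : ℝ :=
  6*(p 4)*(p 5) + (p 6)^2 - (p 4)^2 - (p 5)^2
    - (k : ℝ)^2/(2*(Δ k l)^2)*(p 4)^2*(p 5)^2*(p 7)^2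

def R4 (k l : ℕ) (p : Fin 8 → ℝ) : ℝ :=
  ((k : ℝ) + (l : ℝ))^2/(2*(Δ k l)^2)*(p 5)^2*(p 6)^2*(p 7)^2
  + (l : ℝ)^2/(2*(Δ k l)^2)*(p 4)^2*(p 6)^2*(p 7)^2
  + (k : ℝ)^2/(2*(Δ k l)^2)*(p 4)^2*(p 5)^2*(p 7)^2

/-- The polynomial vector field F of system (2.7). -/
def F (k l : ℕ) (p : Fin 8 → ℝ) : Fin 8 → ℝ :=
  ![ p 0 * (G p - 1) + R1 k l p,
     p 1 * (G p - 1) + R2 k l p,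
     p 2 * (G p - 1) + R3 k l p,
     p 3 * (G p - 1) + R4 k l p,
     p 4 * (G p + p 0 - p 1 - p 2),
     p 5 * (G p + p 1 - p 2 - p 0),
     p 6 * (G p + p 2 - p 0 - p 1),
     p 7 * (-(G p) + p 3) ]

/-- x is a solution of the system on [a,b]: x has derivative F(x(η)) at every η ∈ [a,b]. -/
def IsSolutionOn (k l : ℕ) (x : ℝ → Fin 8 → ℝ) (a b : ℝ) : Prop :=
  ∀ η ∈ Set.Icc a b, HasDerivAt x (F k l (x η)) η

end Spin7

open Spin7 in
/-- Invariance of the trace constraint 2X₁+2X₂+2X₃+X₄ = 1 under the conservation law. -/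
theorem trace_constraint_invariant
    (k l : ℕ) (hk : 0 < k) (hl : 0 < l) (hkl : Nat.Coprime k l)
    (a b : ℝ) (x : ℝ → Fin 8 → ℝ)
    (hsol : IsSolutionOn k l x a b)
    (hcons : ∀ η ∈ Set.Icc a b,
      G (x η) - 1 + 2 * R1 k l (x η) + 2 * R2 k l (x η) + 2 * R3 k l (x η)
        + R4 k l (x η) = 0)
    (η₀ : ℝ) (hη₀ : η₀ ∈ Set.Icc a b)
    (htrace : 2 * x η₀ 0 + 2 * x η₀ 1 + 2 * x η₀ 2 + x η₀ 3 = 1) :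
    ∀ η ∈ Set.Icc a b, 2 * x η 0 + 2 * x η 1 + 2 * x η 2 + x η 3 = 1 := by
  intro η hη
  have hab : a ≤ b := hη₀.1.trans hη₀.2
  -- the deviation function
  set y : ℝ → ℝ := fun t => 2 * x t 0 + 2 * x t 1 + 2 * x t 2 + x t 3 - 1 with hy_def
  -- g = G∘x - 1
  set g : ℝ → ℝ := fun t => G (x t) - 1 with hg_def
  -- y' = g * y on Icc
  have hyderiv : ∀ t ∈ Set.Icc a b, HasDerivAt y (g t * y t) t := by
    intro t ht
    have hx := hsol t ht
    have hxi : ∀ i, HasDerivAt (fun s => x s i) (F k l (x t) i) t :=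
      hasDerivAt_pi.1 hx
    have h0 := hxi 0; have h1 := hxi 1; have h2 := hxi 2; have h3 := hxi 3
    have hD : HasDerivAt y
        (2 * F k l (x t) 0 + 2 * F k l (x t) 1 + 2 * F k l (x t) 2 + F k l (x t) 3) t :=
      ((((h0.const_mul 2).add (h1.const_mul 2)).add (h2.const_mul 2)).add h3).sub_const 1
    have hc := hcons t ht
    have heq : 2 * F k l (x t) 0 + 2 * F k l (x t) 1 + 2 * F k l (x t) 2 + F k l (x t) 3
        = g t * y t := by
      simp only [F, Matrix.cons_val_zero, Matrix.cons_val_one, Matrix.head_cons,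
        Matrix.cons_val_two, Matrix.tail_cons, Matrix.cons_val_three, hg_def, hy_def]
      linear_combination hc
    rw [heq] at hD
    exact hD
  -- g is continuous on Icc
  have hgcont : ∀ t ∈ Set.Icc a b, ContinuousAt g t := by
    intro t ht
    have hx := (hsol t ht).continuousAt
    have : ContinuousAt (fun s => G (x s)) t := by
      have h0 := (hasDerivAt_pi.1 (hsol t ht) 0).continuousAt
      have h1 := (hasDerivAt_pi.1 (hsol t ht) 1).continuousAt
      have h2 := (hasDerivAt_pi.1 (hsol t ht) 2).continuousAt
      have h3 := (hasDerivAt_pi.1 (hsol t ht) 3).continuousAt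
      simp only [G]
      fun_prop
    exact this.sub continuousAt_const
  -- continuous extension of g to ℝ
  set gext : ℝ → ℝ := fun t => g ((Set.projIcc a b hab t : ℝ)) with hgext_def
  have hgext_cont : Continuous gext := by
    apply ContinuousOn.comp_continuous (s := Set.Icc a b)
      (fun t ht => (hgcont t ht).continuousWithinAt)
      (continuous_subtype_val.comp continuous_projIcc)
    intro t; exact (Set.projIcc a b hab t).2
  have hgext_eq : ∀ t ∈ Set.Icc a b, gext t = g t := by
    intro t ht
    simp [hgext_def, Set.projIcc_of_mem hab ht]
  -- the integral Φ and integrating factor ψ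
  set Φ : ℝ → ℝ := fun u => ∫ s in η₀..u, gext s with hΦ_def
  have hΦderiv : ∀ t, HasDerivAt Φ (gext t) t := fun t =>
    (hgext_cont.integral_hasStrictDerivAt η₀ t).hasDerivAt
  set ψ : ℝ → ℝ := fun t => Real.exp (-Φ t) * y t with hψ_def
  have hψderiv : ∀ t ∈ Set.Icc a b, HasDerivAt ψ 0 t := by
    intro t ht
    have hexp : HasDerivAt (fun u => Real.exp (-Φ u)) (-gext t * Real.exp (-Φ t)) t := by
      have := ((hΦderiv t).neg).exp
      simpa [mul_comm] using this
    have := hexp.mul (hyderiv t ht)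
    have heq : -gext t * Real.exp (-Φ t) * y t + Real.exp (-Φ t) * (g t * y t) = 0 := by
      rw [hgext_eq t ht]; ring
    rw [heq] at this
    exact this
  -- ψ is constant on Icc
  have hψcont : ContinuousOn ψ (Set.Icc a b) :=
    fun t ht => (hψderiv t ht).continuousAt.continuousWithinAt
  have hconst : ∀ t ∈ Set.Icc a b, ψ t = ψ a := by
    intro t ht
    exact constant_of_has_deriv_right_zero hψcont
      (fun s hs => ((hψderiv s (Set.mem_Icc_of_Ico hs)).hasDerivWithinAt)) t ht
  have hψη₀ : ψ η₀ = 0 := by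
    simp only [hψ_def, hy_def]
    rw [htrace]; ring
  have hψη : ψ η = 0 := by
    rw [hconst η hη, ← hconst η₀ hη₀, hψη₀]
  have : y η = 0 := by
    have hexp := Real.exp_pos (-Φ η)
    simp only [hψ_def] at hψη
    rcases mul_eq_zero.1 hψη with h | h
    · exact absurd h hexp.ne'
    · exact h
  simp only [hy_def] at this
  linarith
end
end

section
/- Let x : ℝ → ℝ⁸ be a solution of the system on [a,b] such that Z₁(η), Z₂(η), Z₃(η), Z₄(η) ≥ 0 for every η ∈ [a,b]. If X₄(a) ≥ 0, then X₄(η) ≥ 0 for every η ∈ [a,b]. (Proposition: the set {X₄ ≥ 0} is invariant.) -/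
noncomputable section

open Spin7 in
/-- The set {X₄ ≥ 0} is invariant (Proposition 2.1). -/
theorem X4_nonneg_invariant
    (k l : ℕ) (hk : 0 < k) (hl : 0 < l) (hkl : Nat.Coprime k l)
    (a b : ℝ) (x : ℝ → Fin 8 → ℝ)
    (hsol : IsSolutionOn k l x a b)
    (hZ : ∀ η ∈ Set.Icc a b, 0 ≤ x η 4 ∧ 0 ≤ x η 5 ∧ 0 ≤ x η 6 ∧ 0 ≤ x η 7)
    (hab : a ≤ b)
    (hX4a : 0 ≤ x a 3) :
    ∀ η ∈ Set.Icc a b, 0 ≤ x η 3 := by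
  classical
  set y : ℝ → ℝ := fun η => x η 3 with hy_def
  -- derivative of y
  have hy' : ∀ η ∈ Set.Icc a b,
      HasDerivAt y (y η * (G (x η) - 1) + R4 k l (x η)) η := by
    intro η hη
    have := hasDerivAt_pi.mp (hsol η hη) 3
    simpa [F] using this
  -- R4 nonneg
  have hR4 : ∀ p : Fin 8 → ℝ, 0 ≤ R4 k l p := by
    intro p
    unfold R4
    positivity
  -- continuity of each component on [a,b]
  have hcont : ∀ i : Fin 8, ContinuousOn (fun η => x η i) (Set.Icc a b) := by
    intro i η hη
    exact ((hasDerivAt_pi.mp (hsol η hη) i).continuousAt).continuousWithinAt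
  have hcontG : ContinuousOn (fun η => G (x η) - 1) (Set.Icc a b) := by
    unfold G
    exact (((((hcont 0).pow 2).const_smul 2).add (((hcont 1).pow 2).const_smul 2)).add
      (((hcont 2).pow 2).const_smul 2)).add ((hcont 3).pow 2) |>.sub (continuousOn_const (c := (1:ℝ)))
      |> fun h => h.congr (fun η _ => by simp [smul_eq_mul])
  -- bound C
  obtain ⟨C, hC⟩ := (isCompact_Icc : IsCompact (Set.Icc a b)).exists_bound_of_continuousOn hcontG
  -- main argument
  by_contra hcon
  push_neg at hcon
  obtain ⟨η₁, hη₁, hneg⟩ := hcon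
  set S : Set ℝ := {t ∈ Set.Icc a η₁ | 0 ≤ y t} with hS_def
  have hSne : S.Nonempty := ⟨a, ⟨le_refl a, hη₁.1⟩, hX4a⟩
  have hSbdd : BddAbove S := ⟨η₁, fun t ht => ht.1.2⟩
  set s := sSup S with hs_def
  have hsub : Set.Icc a η₁ ⊆ Set.Icc a b := Set.Icc_subset_Icc le_rfl hη₁.2
  have hs_mem : s ∈ Set.Icc a η₁ := by
    constructor
    · exact le_csSup hSbdd ⟨⟨le_refl a, hη₁.1⟩, hX4a⟩
    · exact csSup_le hSne fun t ht => ht.1.2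
  have hs_ab : s ∈ Set.Icc a b := hsub hs_mem
  -- y s ≥ 0
  have hys : 0 ≤ y s := by
    have hclos : s ∈ closure S := csSup_mem_closure hSne hSbdd
    have hcys : ContinuousWithinAt y S s :=
      ((hy' s hs_ab).continuousAt).continuousWithinAt
    have := hcys.mem_closure_image hclos
    have hsubim : y '' S ⊆ Set.Ici (0:ℝ) := by
      rintro _ ⟨t, ht, rfl⟩; exact ht.2
    have : y s ∈ closure (Set.Ici (0:ℝ)) := closure_mono hsubim this
    simpa using this
  -- y ≤ 0 on Ioo s η₁
  have hyneg : ∀ t ∈ Set.Ioo s η₁, y t ≤ 0 := by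
    intro t ht
    by_contra h
    push_neg at h
    have : t ∈ S := ⟨⟨hs_mem.1.trans ht.1.le, ht.2.le⟩, h.le⟩
    exact absurd (le_csSup hSbdd this) (not_le.mpr ht.1)
  -- the weight function
  set w : ℝ → ℝ := fun t => y t * Real.exp (-C * t) with hw_def
  have hw' : ∀ t ∈ Set.Icc a b, HasDerivAt w
      ((y t * (G (x t) - 1) + R4 k l (x t)) * Real.exp (-C * t)
        + y t * (Real.exp (-C * t) * (-C))) t := by
    intro t ht
    have hinner : HasDerivAt (fun u : ℝ => -C * u) (-C) t := by
      simpa using (hasDerivAt_id t).const_mul (-C)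
    exact (hy' t ht).mul hinner.exp
  have hmono : MonotoneOn w (Set.Icc s η₁) := by
    have hsubs : Set.Icc s η₁ ⊆ Set.Icc a b :=
      Set.Icc_subset_Icc hs_ab.1 hη₁.2
    apply monotoneOn_of_deriv_nonneg (convex_Icc s η₁)
    · intro t ht
      exact ((hw' t (hsubs ht)).continuousAt).continuousWithinAt
    · intro t ht
      rw [interior_Icc] at ht
      exact ((hw' t (hsubs (Set.Ioo_subset_Icc_self ht))).differentiableAt).differentiableWithinAt
    · intro t ht
      rw [interior_Icc] at ht
      have htab : t ∈ Set.Icc a b := hsubs (Set.Ioo_subset_Icc_self ht)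
      rw [(hw' t htab).deriv]
      have hyt : y t ≤ 0 := hyneg t ht
      have hCb : |G (x t) - 1| ≤ C := by simpa using hC _ htab
      have h1 : 0 ≤ (C - (G (x t) - 1)) * (-(y t)) :=
        mul_nonneg (by linarith [abs_le.mp hCb]) (by linarith)
      have h2 : 0 ≤ R4 k l (x t) := hR4 _
      have hexp : 0 < Real.exp (-C * t) := Real.exp_pos _
      nlinarith [mul_nonneg h2 hexp.le, mul_nonneg h1 hexp.le]
  have hle : w s ≤ w η₁ := hmono ⟨le_refl s, hs_mem.2⟩ ⟨hs_mem.2, le_refl η₁⟩ hs_mem.2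
  have hws : 0 ≤ w s := mul_nonneg hys (Real.exp_pos _).le
  have hwη₁ : w η₁ < 0 :=
    mul_neg_of_neg_of_pos hneg (Real.exp_pos _)
  linarith
end
end

section
/- For any coprime positive integers k and l, there exist real numbers α and β with 0 < α < 1 and 0 < β < 1 such that L₁(α,β) = 0 and L₂(α,β) = 0. (Existence of the intersection point of the ellipse and the hyperbola on the arc α + β < 7/5, used in the proof of Proposition 3.2.) -/
noncomputable section

/-- L₁(α,β) = (α + β − 3)² + 4(α − β)² − 4. -/
def L₁ (α β : ℝ) : ℝ := (α + β - 3)^2 + 4*(α - β)^2 - 4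

/-- L₂(α,β) = k·α·(3 + 3β − 5α) − l·β·(3 + 3α − 5β). -/
def L₂ (k l : ℕ) (α β : ℝ) : ℝ :=
  (k : ℝ) * α * (3 + 3*β - 5*α) - (l : ℝ) * β * (3 + 3*α - 5*β)

/-- Existence of the intersection point of the ellipse and the hyperbola on the
arc α + β < 7/5 (proof of Proposition 3.2). -/
theorem exists_intersection_small_arc
    (k l : ℕ) (hk : 0 < k) (hl : 0 < l) (hkl : Nat.Coprime k l) :
    ∃ α β : ℝ, 0 < α ∧ α < 1 ∧ 0 < β ∧ β < 1 ∧ L₁ α β = 0 ∧ L₂ k l α β = 0 := by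
  have hk' : (0:ℝ) < k := by exact_mod_cast hk
  have hl' : (0:ℝ) < l := by exact_mod_cast hl
  have key : ∃ t : ℝ, -(3/5) < t ∧ t < 3/5 ∧
      L₂ k l ((3 - 2*Real.sqrt (1 - t^2) + t)/2) ((3 - 2*Real.sqrt (1 - t^2) - t)/2) = 0 := by
    set f : ℝ → ℝ := fun t =>
      L₂ k l ((3 - 2*Real.sqrt (1 - t^2) + t)/2) ((3 - 2*Real.sqrt (1 - t^2) - t)/2) with hf
    have hs35 : Real.sqrt (1 - (3/5:ℝ)^2) = 4/5 := by
      rw [show (1:ℝ) - (3/5)^2 = (4/5)^2 by norm_num]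
      exact Real.sqrt_sq (by norm_num)
    have hs35' : Real.sqrt (1 - (-(3/5):ℝ)^2) = 4/5 := by
      rw [show (1:ℝ) - (-(3/5))^2 = (4/5)^2 by norm_num]
      exact Real.sqrt_sq (by norm_num)
    have hcont : Continuous f := by
      have h1 : Continuous fun t : ℝ => Real.sqrt (1 - t^2) :=
        Real.continuous_sqrt.comp (by continuity)
      unfold f
      unfold L₂
      fun_prop
    have hfb : f (3/5) < 0 := by
      simp only [hf, L₂, hs35]
      nlinarith
    have hfa : 0 < f (-(3/5)) := by
      simp only [hf, L₂, hs35']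
      nlinarith
    have hsub : Set.Icc (f (3/5)) (f (-(3/5))) ⊆ f '' Set.Icc (-(3/5)) (3/5) :=
      intermediate_value_Icc' (by norm_num) hcont.continuousOn
    obtain ⟨t, ht, hft⟩ := hsub ⟨hfb.le, hfa.le⟩
    have ht1 : -(3/5) < t := by
      rcases lt_or_eq_of_le ht.1 with h | h
      · exact h
      · exfalso; rw [← h] at hft; exact hfa.ne' hft
    have ht2 : t < 3/5 := by
      rcases lt_or_eq_of_le ht.2 with h | h
      · exact h
      · exfalso; rw [h] at hft; exact hfb.ne hft
    exact ⟨t, ht1, ht2, hft⟩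
  obtain ⟨t, ht1, ht2, hL2⟩ := key
  set s := Real.sqrt (1 - t^2) with hsdef
  have ht2sq : t^2 < 1 := by nlinarith
  have hs0 : 0 ≤ s := Real.sqrt_nonneg _
  have hssq : s^2 = 1 - t^2 := Real.sq_sqrt (by nlinarith)
  have hs1 : s ≤ 1 := by nlinarith
  have hα1 : (1 + t)/2 < s := by
    rw [hsdef]
    exact (Real.lt_sqrt (by linarith)).mpr (by nlinarith)
  have hβ1 : (1 - t)/2 < s := by
    rw [hsdef]
    exact (Real.lt_sqrt (by linarith)).mpr (by nlinarith)
  refine ⟨(3 - 2*s + t)/2, (3 - 2*s - t)/2, by linarith, by linarith, by linarith,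
    by linarith, ?_, hL2⟩
  unfold L₁
  linear_combination 4 * hssq
end
end

section
/- For any coprime positive integers k and l, there exist real numbers α and β with α > 2 and β > 2 such that L₁(α,β) = 0 and L₂(α,β) = 0. (Existence of the intersection point of the ellipse and the hyperbola on the arc α + β > 23/5, used in the proof of Proposition 3.2.) -/
noncomputable section

/-- Existence of the intersection point of the ellipse and the hyperbola on the
arc α + β > 23/5 (proof of Proposition 3.2). -/
theorem exists_intersection_large_arc
    (k l : ℕ) (hk : 0 < k) (hl : 0 < l) (hkl : Nat.Coprime k l) :
    ∃ α β : ℝ, 2 < α ∧ 2 < β ∧ L₁ α β = 0 ∧ L₂ k l α β = 0 := by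
  have hk' : (0:ℝ) < k := by exact_mod_cast hk
  have hl' : (0:ℝ) < l := by exact_mod_cast hl
  set A : ℝ → ℝ := fun s => (3 + 2*Real.sqrt (1 - s^2) + s)/2 with hA
  set B : ℝ → ℝ := fun s => (3 + 2*Real.sqrt (1 - s^2) - s)/2 with hB
  set f : ℝ → ℝ := fun s => L₂ k l (A s) (B s) with hf
  have hcont : ContinuousOn f (Set.Icc (-(3/5)) (3/5)) := by
    apply Continuous.continuousOn
    simp only [hf, hA, hB, L₂]
    fun_prop
  have hs1 : Real.sqrt (1 - (-(3/5):ℝ)^2) = 4/5 := by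
    rw [show (1 - (-(3/5):ℝ)^2) = (4/5)^2 by norm_num, Real.sqrt_sq (by norm_num)]
  have hs2 : Real.sqrt (1 - ((3/5):ℝ)^2) = 4/5 := by
    rw [show (1 - ((3/5):ℝ)^2) = (4/5)^2 by norm_num, Real.sqrt_sq (by norm_num)]
  have hfa : f (-(3/5)) = 8*k/5 + 52*l/5 := by
    simp only [hf, hA, hB, L₂, hs1]; ring
  have hfb : f (3/5) = -(52*k/5 + 8*l/5) := by
    simp only [hf, hA, hB, L₂, hs2]; ring
  have hsub := intermediate_value_Icc' (by norm_num : (-(3/5):ℝ) ≤ 3/5) hcont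
  have h0 : (0:ℝ) ∈ Set.Icc (f (3/5)) (f (-(3/5))) := by
    constructor
    · rw [hfb]; nlinarith
    · rw [hfa]; positivity
  obtain ⟨s, hs, hfs⟩ := hsub h0
  have hsl : -(3/5) < s := by
    rcases lt_or_eq_of_le hs.1 with h | h
    · exact h
    · exfalso; rw [← h] at hfs; rw [hfa] at hfs; nlinarith
  have hsr : s < 3/5 := by
    rcases lt_or_eq_of_le hs.2 with h | h
    · exact h
    · exfalso; rw [h] at hfs; rw [hfb] at hfs; nlinarith
  have hnn : (0:ℝ) ≤ 1 - s^2 := by nlinarith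
  have hr0 : 0 ≤ Real.sqrt (1 - s^2) := Real.sqrt_nonneg _
  have hr2 : Real.sqrt (1 - s^2) ^ 2 = 1 - s^2 := Real.sq_sqrt hnn
  refine ⟨A s, B s, ?_, ?_, ?_, hfs⟩
  · show 2 < (3 + 2*Real.sqrt (1 - s^2) + s)/2
    nlinarith [hr0, hr2, sq_nonneg (2*Real.sqrt (1 - s^2) - (1 - s))]
  · show 2 < (3 + 2*Real.sqrt (1 - s^2) - s)/2
    nlinarith [hr0, hr2, sq_nonneg (2*Real.sqrt (1 - s^2) - (1 + s))]
  · show L₁ ((3 + 2*Real.sqrt (1 - s^2) + s)/2) ((3 + 2*Real.sqrt (1 - s^2) - s)/2) = 0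
    unfold L₁; nlinarith [hr2]
end
end

section
/- Let x : ℝ → ℝ⁸ be a solution of the system on [a,b] such that x(η) satisfies the Spin(7)⁺ constraints for every η ∈ [a,b]. If at η = a one has Z₁ ≤ Z₂, Z₁ ≤ Z₃, and (k·√(Z₁Z₂) + l·√(Z₁Z₃) + (k+l)·√(Z₂Z₃))·Z₄ ≤ 2Δ, then these three inequalities hold at x(η) for every η ∈ [a,b]. (Lemma 4.1: the set 𝒟⁺ is invariant.) -/
noncomputable section

namespace Spin7

/-- The Spin(7)⁺ constraints (equations (2.14), 𝒞⁺). -/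
def SpinPlus (k l : ℕ) (p : Fin 8 → ℝ) : Prop :=
  0 ≤ p 4 ∧ 0 ≤ p 5 ∧ 0 ≤ p 6 ∧ 0 ≤ p 7 ∧
  p 0 = p 5 + p 6 - p 4 - ((k : ℝ) + l)/(2*Δ k l) * (p 5) * (p 6) * (p 7) ∧
  p 1 = p 6 + p 4 - p 5 + (l : ℝ)/(2*Δ k l) * (p 4) * (p 6) * (p 7) ∧
  p 2 = p 4 + p 5 - p 6 + (k : ℝ)/(2*Δ k l) * (p 4) * (p 5) * (p 7) ∧
  p 3 = ((k : ℝ) + l)/(2*Δ k l) * (p 5) * (p 6) * (p 7)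
      - (l : ℝ)/(2*Δ k l) * (p 4) * (p 6) * (p 7)
      - (k : ℝ)/(2*Δ k l) * (p 4) * (p 5) * (p 7) ∧
  2*(p 4 + p 5 + p 6) - p 3 = 1

end Spin7


namespace Spin7Aux

open Set intervalIntegral

lemma integral_hasDerivAt {c : ℝ → ℝ} (hc : Continuous c) (a t : ℝ) :
    HasDerivAt (fun u => ∫ s in a..u, c s) (c t) t :=
  integral_hasDerivAt_right (hc.intervalIntegrable a t)
    (hc.stronglyMeasurableAtFilter _ _) hc.continuousAt

/-- Comparison lemma: if u' ≤ c·u on [a,b] and u a ≤ 0 then u ≤ 0 on [a,b]. -/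
lemma comparison {a b : ℝ} (hab : a ≤ b) {u d c : ℝ → ℝ} (hc : Continuous c)
    (hu : ∀ η ∈ Set.Icc a b, HasDerivAt u (d η) η)
    (hle : ∀ η ∈ Set.Icc a b, d η ≤ c η * u η) (ha : u a ≤ 0) :
    ∀ η ∈ Set.Icc a b, u η ≤ 0 := by
  set C : ℝ → ℝ := fun t => ∫ s in a..t, c s with hCdef
  have hCd : ∀ t, HasDerivAt C (c t) t := fun t => integral_hasDerivAt hc a t
  set v : ℝ → ℝ := fun t => u t * Real.exp (-C t) with hvdef
  have hvd : ∀ η ∈ Set.Icc a b,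
      HasDerivAt v ((d η - c η * u η) * Real.exp (-C η)) η := by
    intro η hη
    have h1 : HasDerivAt (fun t => u t * Real.exp (-C t))
        (d η * Real.exp (-C η) + u η * (Real.exp (-C η) * -c η)) η :=
      (hu η hη).mul (((hCd η).neg).exp)
    convert h1 using 1
    ring
  have hanti : AntitoneOn v (Set.Icc a b) := by
    apply antitoneOn_of_deriv_nonpos (convex_Icc a b)
    · exact fun η hη => ((hvd η hη).continuousAt).continuousWithinAt
    · intro η hη
      rw [interior_Icc] at hη
      exact (hvd η (Set.mem_Icc_of_Ioo hη)).differentiableAt.differentiableWithinAt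
    · intro η hη
      rw [interior_Icc] at hη
      have hη' := Set.mem_Icc_of_Ioo hη
      rw [(hvd η hη').deriv]
      have h2 := hle η hη'
      have he := Real.exp_pos (-C η)
      nlinarith
  intro η hη
  have h2 : v η ≤ v a := hanti (Set.left_mem_Icc.mpr hab) hη hη.1
  have h3 : v a ≤ 0 := by
    have he := Real.exp_pos (-C a)
    simp only [hvdef]
    nlinarith
  have he := Real.exp_pos (-C η)
  simp only [hvdef] at h2 h3
  nlinarith

/-- Exponential representation of solutions of linear ODEs. -/
lemma exp_repr {a b : ℝ} (hab : a ≤ b) {u c : ℝ → ℝ} (hc : Continuous c)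
    (hu : ∀ η ∈ Set.Icc a b, HasDerivAt u (c η * u η) η) :
    ∀ η ∈ Set.Icc a b, u η = u a * Real.exp (∫ s in a..η, c s) := by
  set C : ℝ → ℝ := fun t => ∫ s in a..t, c s with hCdef
  have hCd : ∀ t, HasDerivAt C (c t) t := fun t => integral_hasDerivAt hc a t
  set v : ℝ → ℝ := fun t => u t * Real.exp (-C t) with hvdef
  have hvd : ∀ η ∈ Set.Icc a b, HasDerivAt v 0 η := by
    intro η hη
    have h1 : HasDerivAt (fun t => u t * Real.exp (-C t))
        (c η * u η * Real.exp (-C η) + u η * (Real.exp (-C η) * -c η)) η :=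
      (hu η hη).mul (((hCd η).neg).exp)
    convert h1 using 1
    ring
  have hconst : ∀ η ∈ Set.Icc a b, v η = v a := by
    intro η hη
    have hanti : AntitoneOn v (Set.Icc a b) := by
      apply antitoneOn_of_deriv_nonpos (convex_Icc a b)
      · exact fun t ht => ((hvd t ht).continuousAt).continuousWithinAt
      · intro t ht
        rw [interior_Icc] at ht
        exact (hvd t (Set.mem_Icc_of_Ioo ht)).differentiableAt.differentiableWithinAt
      · intro t ht
        rw [interior_Icc] at ht
        rw [(hvd t (Set.mem_Icc_of_Ioo ht)).deriv]
    have hmono : MonotoneOn v (Set.Icc a b) := by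
      apply monotoneOn_of_deriv_nonneg (convex_Icc a b)
      · exact fun t ht => ((hvd t ht).continuousAt).continuousWithinAt
      · intro t ht
        rw [interior_Icc] at ht
        exact (hvd t (Set.mem_Icc_of_Ioo ht)).differentiableAt.differentiableWithinAt
      · intro t ht
        rw [interior_Icc] at ht
        rw [(hvd t (Set.mem_Icc_of_Ioo ht)).deriv]
    exact le_antisymm (hanti (Set.left_mem_Icc.mpr hab) hη hη.1)
      (hmono (Set.left_mem_Icc.mpr hab) hη hη.1)
  intro η hη
  have h1 := hconst η hη
  have hCa : C a = 0 := integral_same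
  simp only [hvdef, hCa, neg_zero, Real.exp_zero, mul_one] at h1
  have he : Real.exp (-C η) ≠ 0 := (Real.exp_pos _).ne'
  have h2 : u η = u a * Real.exp (C η) := by
    field_simp [Real.exp_neg] at h1
    rw [← h1, mul_assoc, ← Real.exp_add]; simp
  rw [h2]

lemma sqrt_exp (t : ℝ) : Real.sqrt (Real.exp t) = Real.exp (t/2) := by
  have h : Real.exp (t/2)^2 = Real.exp t := by
    rw [sq, ← Real.exp_add]
    norm_num
  rw [← h, Real.sqrt_sq (Real.exp_pos _).le]

lemma Wl_nonneg (p a b : ℝ) (hp : 0 ≤ p) (ha : 0 ≤ a) (_hb : 0 ≤ b) :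
    0 ≤ a^2*b^2 - 2*a^3*b + a^4 + 4*p*a*b^2 - 5*p*a^2*b + 2*p*a^3 + 4*p^2*b^2
      + p^2*a*b - 2*p^2*a^2 + 8*p^3*b - 3*p^3*a + 4*p^4 := by
  rcases eq_or_lt_of_le (by positivity : (0:ℝ) ≤ a + 2*p) with h | h
  · have ha0 : a = 0 := by nlinarith
    have hp0 : p = 0 := by nlinarith
    simp [ha0, hp0]
  · have h2 : (0:ℝ) < 4*(a+2*p)^2 := by positivity
    have h3 : 4*(a+2*p)^2 * 0 ≤ 4*(a+2*p)^2*(a^2*b^2 - 2*a^3*b + a^4 + 4*p*a*b^2 - 5*p*a^2*b + 2*p*a^3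
        + 4*p^2*b^2 + p^2*a*b - 2*p^2*a^2 + 8*p^3*b - 3*p^3*a + 4*p^4) := by
      have key : 4*(a+2*p)^2*(a^2*b^2 - 2*a^3*b + a^4 + 4*p*a*b^2 - 5*p*a^2*b + 2*p*a^3
          + 4*p^2*b^2 + p^2*a*b - 2*p^2*a^2 + 8*p^3*b - 3*p^3*a + 4*p^4)
          = (2*(a+2*p)^2*b + (8*p^3 + p^2*a - 5*p*a^2 - 2*a^3))^2
            + (4*p*a^5 + 19*p^2*a^4 + 30*p^3*a^3 + 15*p^4*a^2) := by ring
      rw [key, mul_zero]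
      positivity
    exact le_of_mul_le_mul_left h3 h2

lemma H_nonneg (k l z1 z2 z3 : ℝ) (hk : 0 ≤ k) (hl : 0 ≤ l)
    (h1 : 0 ≤ z1) (h12 : z1 ≤ z2) (h13 : z1 ≤ z3) :
    0 ≤ (k*(z1*z2)+l*(z1*z3)+(k+l)*(z2*z3))^2*(z1^2+z2^2+z3^2)
      - (k*(z1*z2)+l*(z1*z3)+(k+l)*(z2*z3))*((k+l)*z2^2*z3^2 - l*z1^2*z3^2 - k*z1^2*z2^2)
      - 2*(k*(z1*z2)+l*(z1*z3)+(k+l)*(z2*z3))*(z1*z2*z3)*((k+l)*z1+l*z2+k*z3)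
      - ((k+l)^2*z2^3*z3^3 - l^2*z1^3*z3^3 - k^2*z1^3*z2^3) := by
  have h2 : 0 ≤ z2 := le_trans h1 h12
  have h3 : 0 ≤ z3 := le_trans h1 h13
  have e1 := Wl_nonneg z1 (z3-z1) (z2-z1) h1 (by linarith) (by linarith)
  have e2 := Wl_nonneg z1 (z2-z1) (z3-z1) h1 (by linarith) (by linarith)
  have hEm : 0 ≤ 2*z2*z3*(z3-z2)^2 + z1^2*(z3-z2)^2 + z1*(z2+z3)*(2*(z2-z3)^2+z2*z3)
      + z1^3*(z2+z3) + 2*z1^4 := by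
    have t1 : 0 ≤ 2*z2*z3*(z3-z2)^2 := by positivity
    have t2 : 0 ≤ z1^2*(z3-z2)^2 := by positivity
    have t3 : 0 ≤ z1*(z2+z3)*(2*(z2-z3)^2+z2*z3) := by
      apply mul_nonneg (mul_nonneg h1 (by linarith))
      nlinarith [sq_nonneg (z2-z3), mul_nonneg h2 h3]
    have t4 : 0 ≤ z1^3*(z2+z3) := mul_nonneg (by positivity) (by linarith)
    nlinarith [pow_nonneg h1 4]
  have idt : (k*(z1*z2)+l*(z1*z3)+(k+l)*(z2*z3))^2*(z1^2+z2^2+z3^2)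
      - (k*(z1*z2)+l*(z1*z3)+(k+l)*(z2*z3))*((k+l)*z2^2*z3^2 - l*z1^2*z3^2 - k*z1^2*z2^2)
      - 2*(k*(z1*z2)+l*(z1*z3)+(k+l)*(z2*z3))*(z1*z2*z3)*((k+l)*z1+l*z2+k*z3)
      - ((k+l)^2*z2^3*z3^3 - l^2*z1^3*z3^3 - k^2*z1^3*z2^3)
      = k^2*z2^2*((z3-z1)^2*(z2-z1)^2 - 2*(z3-z1)^3*(z2-z1) + (z3-z1)^4
          + 4*z1*(z3-z1)*(z2-z1)^2 - 5*z1*(z3-z1)^2*(z2-z1) + 2*z1*(z3-z1)^3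
          + 4*z1^2*(z2-z1)^2 + z1^2*(z3-z1)*(z2-z1) - 2*z1^2*(z3-z1)^2
          + 8*z1^3*(z2-z1) - 3*z1^3*(z3-z1) + 4*z1^4)
        + k*l*(z2*z3)*(2*z2*z3*(z3-z2)^2 + z1^2*(z3-z2)^2 + z1*(z2+z3)*(2*(z2-z3)^2+z2*z3)
          + z1^3*(z2+z3) + 2*z1^4)
        + l^2*z3^2*((z2-z1)^2*(z3-z1)^2 - 2*(z2-z1)^3*(z3-z1) + (z2-z1)^4
          + 4*z1*(z2-z1)*(z3-z1)^2 - 5*z1*(z2-z1)^2*(z3-z1) + 2*z1*(z2-z1)^3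
          + 4*z1^2*(z3-z1)^2 + z1^2*(z2-z1)*(z3-z1) - 2*z1^2*(z2-z1)^2
          + 8*z1^3*(z3-z1) - 3*z1^3*(z2-z1) + 4*z1^4) := by ring
  rw [idt]
  have c1 : 0 ≤ k^2*z2^2 := by positivity
  have c2 : 0 ≤ k*l*(z2*z3) := by positivity
  have c3 : 0 ≤ l^2*z3^2 := by positivity
  have m1 := mul_nonneg c1 e1
  have m2 := mul_nonneg c2 hEm
  have m3 := mul_nonneg c3 e2
  linarith

set_option maxHeartbeats 1000000 in
lemma key (k l D Z1 Z2 Z3 Z4 z1 z2 z3 X1 X2 X3 X4 c : ℝ)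
    (hD : 0 < D) (hk : 0 ≤ k) (hl : 0 ≤ l)
    (hz1 : z1^2 = Z1) (hz2 : z2^2 = Z2) (hz3 : z3^2 = Z3)
    (h1 : 0 ≤ z1) (h4 : 0 ≤ Z4)
    (h12 : z1 ≤ z2) (h13 : z1 ≤ z3)
    (hA : 0 < k*(z1*z2) + l*(z1*z3) + (k+l)*(z2*z3))
    (hX1 : X1 = Z2 + Z3 - Z1 - (k+l)/(2*D)*Z2*Z3*Z4)
    (hX2 : X2 = Z3 + Z1 - Z2 + l/(2*D)*Z1*Z3*Z4)
    (hX3 : X3 = Z1 + Z2 - Z3 + k/(2*D)*Z1*Z2*Z4)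
    (hX4 : X4 = (k+l)/(2*D)*Z2*Z3*Z4 - l/(2*D)*Z1*Z3*Z4 - k/(2*D)*Z1*Z2*Z4)
    (hlin : 2*(Z1+Z2+Z3) - X4 = 1)
    (hc : c = Z4*((k*(z1*z2)+l*(z1*z3)+(k+l)*(z2*z3))*((k+l)*z2^2*z3^2 - l*z1^2*z3^2 - k*z1^2*z2^2)
          + 2*((k+l)^2*z2^3*z3^3 - l^2*z1^3*z3^3 - k^2*z1^3*z2^3))
          /(4*D*(k*(z1*z2)+l*(z1*z3)+(k+l)*(z2*z3))) + (2*(z1^2+z2^2+z3^2)-1)/2) :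
    k*(z1*z2)*Z4*(X4-X3) + l*(z1*z3)*Z4*(X4-X2) + (k+l)*(z2*z3)*Z4*(X4-X1)
      ≤ c * ((k*(z1*z2)+l*(z1*z3)+(k+l)*(z2*z3))*Z4 - 2*D) := by
  subst hz1 hz2 hz3
  have hD' : D ≠ 0 := ne_of_gt hD
  have hA' : (k*(z1*z2) + l*(z1*z3) + (k+l)*(z2*z3)) ≠ 0 := ne_of_gt hA
  have hX1' : 2*D*X1 = 2*D*(z2^2+z3^2-z1^2) - (k+l)*(z2^2*z3^2*Z4) := by
    rw [hX1]; field_simp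
  have hX2' : 2*D*X2 = 2*D*(z3^2+z1^2-z2^2) + l*(z1^2*z3^2*Z4) := by
    rw [hX2]; field_simp
  have hX3' : 2*D*X3 = 2*D*(z1^2+z2^2-z3^2) + k*(z1^2*z2^2*Z4) := by
    rw [hX3]; field_simp
  have hX4' : 2*D*X4 = (k+l)*(z2^2*z3^2*Z4) - l*(z1^2*z3^2*Z4) - k*(z1^2*z2^2*Z4) := by
    rw [hX4]; field_simp
  have hC : Z4*((k+l)*z2^2*z3^2 - l*z1^2*z3^2 - k*z1^2*z2^2)
      = 2*D*(2*(z1^2+z2^2+z3^2)-1) := by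
    linear_combination -hX4' - 2*D*hlin
  have hH := H_nonneg k l z1 z2 z3 hk hl h1 h12 h13
  set A := k*(z1*z2) + l*(z1*z3) + (k+l)*(z2*z3) with hAdef
  set Q := (k+l)*z2^2*z3^2 - l*z1^2*z3^2 - k*z1^2*z2^2 with hQdef
  set P := (k+l)^2*z2^3*z3^3 - l^2*z1^3*z3^3 - k^2*z1^3*z2^3 with hPdef
  set σ := z1^2+z2^2+z3^2 with hσdef
  set HH := A^2*σ - A*Q - 2*A*(z1*z2*z3)*((k+l)*z1+l*z2+k*z3) - P with hHdef
  have main : (Z4*(A*Q+2*P) + 2*D*A*(2*σ-1))*(A*Z4-2*D)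
      - 4*D*A*(k*(z1*z2)*Z4*(X4-X3) + l*(z1*z3)*Z4*(X4-X2) + (k+l)*(z2*z3)*Z4*(X4-X1))
      = 4*D*Z4*HH := by
    simp only [hAdef, hQdef, hPdef, hσdef, hHdef]
    linear_combination (2*((k:ℝ)+l)*(z2*z3)*Z4*(k*(z1*z2) + l*(z1*z3) + (k+l)*(z2*z3)))*hX1'
      + (2*l*(z1*z3)*Z4*(k*(z1*z2) + l*(z1*z3) + (k+l)*(z2*z3)))*hX2'
      + (2*k*(z1*z2)*Z4*(k*(z1*z2) + l*(z1*z3) + (k+l)*(z2*z3)))*hX3'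
      + (-2*(k*(z1*z2) + l*(z1*z3) + (k+l)*(z2*z3))^2*Z4)*hX4'
      + (2*D*(k*z2*(z1+z3) + l*z3*(z1+z2)) - Z4*(k*z2*(z1+z3) + l*z3*(z1+z2))^2)*hC
  have hcc : c*(4*D*A) = Z4*(A*Q+2*P) + 2*D*A*(2*σ-1) := by
    rw [hc, add_mul, div_mul_cancel₀ _ (by positivity : (4*D*(k*(z1*z2) + l*(z1*z3) + (k+l)*(z2*z3))) ≠ 0)]
    ring
  have hge : 0 ≤ (Z4*(A*Q+2*P) + 2*D*A*(2*σ-1))*(A*Z4-2*D)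
      - 4*D*A*(k*(z1*z2)*Z4*(X4-X3) + l*(z1*z3)*Z4*(X4-X2) + (k+l)*(z2*z3)*Z4*(X4-X1)) := by
    rw [main]
    have h4D : 0 ≤ 4*D := by linarith
    exact mul_nonneg (mul_nonneg h4D h4) hH
  have h4DA : 0 < 4*D*A := by positivity
  have h5 : (4*D*A) * (c*(A*Z4-2*D)
      - (k*(z1*z2)*Z4*(X4-X3) + l*(z1*z3)*Z4*(X4-X2) + (k+l)*(z2*z3)*Z4*(X4-X1)))
      = (Z4*(A*Q+2*P) + 2*D*A*(2*σ-1))*(A*Z4-2*D)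
      - 4*D*A*(k*(z1*z2)*Z4*(X4-X3) + l*(z1*z3)*Z4*(X4-X2) + (k+l)*(z2*z3)*Z4*(X4-X1)) := by
    linear_combination (A*Z4-2*D)*hcc
  have h6 : (4*D*A) * 0 ≤ (4*D*A) * (c*(A*Z4-2*D)
      - (k*(z1*z2)*Z4*(X4-X3) + l*(z1*z3)*Z4*(X4-X2) + (k+l)*(z2*z3)*Z4*(X4-X1))) := by
    rw [mul_zero, h5]; exact hge
  have h7 := le_of_mul_le_mul_left h6 h4DA
  linarith

end Spin7Aux

set_option maxHeartbeats 4000000 in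
open Spin7 in
/-- Lemma 4.1: the set 𝒟⁺ is invariant. -/
theorem Dplus_invariant
    (k l : ℕ) (hk : 0 < k) (hl : 0 < l) (hkl : Nat.Coprime k l)
    (a b : ℝ) (hab : a ≤ b) (x : ℝ → Fin 8 → ℝ)
    (hsol : IsSolutionOn k l x a b)
    (hspin : ∀ η ∈ Set.Icc a b, SpinPlus k l (x η))
    (h1a : x a 4 ≤ x a 5) (h2a : x a 4 ≤ x a 6)
    (h3a : ((k : ℝ) * Real.sqrt (x a 4 * x a 5) + (l : ℝ) * Real.sqrt (x a 4 * x a 6)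
        + ((k : ℝ) + l) * Real.sqrt (x a 5 * x a 6)) * x a 7 ≤ 2 * Δ k l) :
    ∀ η ∈ Set.Icc a b,
      x η 4 ≤ x η 5 ∧ x η 4 ≤ x η 6 ∧
      ((k : ℝ) * Real.sqrt (x η 4 * x η 5) + (l : ℝ) * Real.sqrt (x η 4 * x η 6)
        + ((k : ℝ) + l) * Real.sqrt (x η 5 * x η 6)) * x η 7 ≤ 2 * Δ k l := by
  have hΔ : 0 < Δ k l := by
    have hk1 : (1:ℝ) ≤ (k:ℝ) := by exact_mod_cast hk
    have hl1 : (1:ℝ) ≤ (l:ℝ) := by exact_mod_cast hl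
    simp only [Δ]; nlinarith
  have hk0 : (0:ℝ) ≤ (k:ℝ) := Nat.cast_nonneg k
  have hl0 : (0:ℝ) ≤ (l:ℝ) := Nat.cast_nonneg l
  have hd : ∀ (i : Fin 8), ∀ η ∈ Set.Icc a b, HasDerivAt (fun t => x t i) (F k l (x η) i) η :=
    fun i η hη => (hasDerivAt_pi.mp (hsol η hη)) i
  have hxc : ContinuousOn x (Set.Icc a b) :=
    fun η hη => ((hsol η hη).continuousAt).continuousWithinAt
  set π : ℝ → ℝ := fun t => max a (min b t) with hπdef
  have hπc : Continuous π := continuous_const.max (continuous_const.min continuous_id)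
  have hπmem : ∀ t, π t ∈ Set.Icc a b := fun t => ⟨le_max_left _ _, max_le hab (min_le_left _ _)⟩
  have hπeq : ∀ η ∈ Set.Icc a b, π η = η := by
    intro η hη
    simp only [hπdef]
    rw [min_eq_right hη.2, max_eq_right hη.1]
  set xe : ℝ → Fin 8 → ℝ := fun t => x (π t) with hxedef
  have hxec : Continuous xe := hxc.comp_continuous hπc hπmem
  have hxei : ∀ i : Fin 8, Continuous (fun t => xe t i) := fun i => (continuous_apply i).comp hxec
  have hGc : Continuous (fun t => G (xe t)) := by
    simp only [G]
    exact ((((continuous_const.mul ((hxei 0).pow 2)).add (continuous_const.mul ((hxei 1).pow 2))).add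
      (continuous_const.mul ((hxei 2).pow 2))).add ((hxei 3).pow 2))
  have hF4 : ∀ p : Fin 8 → ℝ, F k l p 4 = p 4 * (G p + p 0 - p 1 - p 2) := fun p => rfl
  have hF5 : ∀ p : Fin 8 → ℝ, F k l p 5 = p 5 * (G p + p 1 - p 2 - p 0) := fun p => rfl
  have hF6 : ∀ p : Fin 8 → ℝ, F k l p 6 = p 6 * (G p + p 2 - p 0 - p 1) := fun p => rfl
  have hF7 : ∀ p : Fin 8 → ℝ, F k l p 7 = p 7 * (-(G p) + p 3) := fun p => rfl
  -- Part A: the two monotonicity inequalities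
  have hmono1 : ∀ η ∈ Set.Icc a b, x η 4 - x η 5 ≤ 0 := by
    apply Spin7Aux.comparison hab (u := fun t => x t 4 - x t 5)
      (d := fun η => F k l (x η) 4 - F k l (x η) 5)
      (c := fun t => G (xe t) - xe t 2 - 2*(xe t 4 + xe t 5))
    · exact (hGc.sub (hxei 2)).sub (continuous_const.mul ((hxei 4).add (hxei 5)))
    · exact fun η hη => (hd 4 η hη).sub (hd 5 η hη)
    · intro η hη
      obtain ⟨h4, h5, h6, h7, e0, e1, e2, e3, elin⟩ := hspin η hη
      simp only [hxedef]
      rw [hπeq η hη, hF4, hF5]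
      have hg : 0 ≤ (((k:ℝ)+l)*(x η 5)+(l:ℝ)*(x η 4))*((x η 6)*(x η 7)*((x η 4)+(x η 5)))/(2*Δ k l) := by
        apply div_nonneg _ (by linarith)
        apply mul_nonneg (by nlinarith)
        apply mul_nonneg (mul_nonneg h6 h7) (by linarith)
      have hid : x η 4 * (G (x η) + x η 0 - x η 1 - x η 2)
            - x η 5 * (G (x η) + x η 1 - x η 2 - x η 0)
          = (G (x η) - x η 2 - 2*(x η 4 + x η 5))*(x η 4 - x η 5)
            - (((k:ℝ)+l)*(x η 5)+(l:ℝ)*(x η 4))*((x η 6)*(x η 7)*((x η 4)+(x η 5)))/(2*Δ k l) := by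
        linear_combination (x η 4 + x η 5) * e0 - (x η 4 + x η 5) * e1
      linarith
    · linarith
  have hmono2 : ∀ η ∈ Set.Icc a b, x η 4 - x η 6 ≤ 0 := by
    apply Spin7Aux.comparison hab (u := fun t => x t 4 - x t 6)
      (d := fun η => F k l (x η) 4 - F k l (x η) 6)
      (c := fun t => G (xe t) - xe t 1 - 2*(xe t 4 + xe t 6))
    · exact (hGc.sub (hxei 1)).sub (continuous_const.mul ((hxei 4).add (hxei 6)))
    · exact fun η hη => (hd 4 η hη).sub (hd 6 η hη)
    · intro η hη
      obtain ⟨h4, h5, h6, h7, e0, e1, e2, e3, elin⟩ := hspin η hη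
      simp only [hxedef]
      rw [hπeq η hη, hF4, hF6]
      have hg : 0 ≤ (((k:ℝ)+l)*(x η 6)+(k:ℝ)*(x η 4))*((x η 5)*(x η 7)*((x η 4)+(x η 6)))/(2*Δ k l) := by
        apply div_nonneg _ (by linarith)
        apply mul_nonneg (by nlinarith)
        apply mul_nonneg (mul_nonneg h5 h7) (by linarith)
      have hid : x η 4 * (G (x η) + x η 0 - x η 1 - x η 2)
            - x η 6 * (G (x η) + x η 2 - x η 0 - x η 1)
          = (G (x η) - x η 1 - 2*(x η 4 + x η 6))*(x η 4 - x η 6)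
            - (((k:ℝ)+l)*(x η 6)+(k:ℝ)*(x η 4))*((x η 5)*(x η 7)*((x η 4)+(x η 6)))/(2*Δ k l) := by
        linear_combination (x η 4 + x η 6) * e0 - (x η 4 + x η 6) * e2
      linarith
    · linarith
  -- Part B: the weighted sqrt inequality
  have hW : ∀ η ∈ Set.Icc a b,
      ((k : ℝ) * Real.sqrt (x η 4 * x η 5) + (l : ℝ) * Real.sqrt (x η 4 * x η 6)
        + ((k : ℝ) + l) * Real.sqrt (x η 5 * x η 6)) * x η 7 ≤ 2 * Δ k l := by
    set c4f : ℝ → ℝ := fun t => G (xe t) + xe t 0 - xe t 1 - xe t 2 with hc4def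
    set c5f : ℝ → ℝ := fun t => G (xe t) + xe t 1 - xe t 2 - xe t 0 with hc5def
    set c6f : ℝ → ℝ := fun t => G (xe t) + xe t 2 - xe t 0 - xe t 1 with hc6def
    set c7f : ℝ → ℝ := fun t => -(G (xe t)) + xe t 3 with hc7def
    have hc4c : Continuous c4f := ((hGc.add (hxei 0)).sub (hxei 1)).sub (hxei 2)
    have hc5c : Continuous c5f := ((hGc.add (hxei 1)).sub (hxei 2)).sub (hxei 0)
    have hc6c : Continuous c6f := ((hGc.add (hxei 2)).sub (hxei 0)).sub (hxei 1)
    have hc7c : Continuous c7f := (hGc.neg).add (hxei 3)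
    have hrep4 : ∀ η ∈ Set.Icc a b, x η 4 = x a 4 * Real.exp (∫ s in a..η, c4f s) := by
      apply Spin7Aux.exp_repr hab hc4c
      intro η hη
      have h := hd 4 η hη
      rw [hF4] at h
      convert h using 1
      simp only [hc4def, hxedef]
      rw [hπeq η hη]; ring
    have hrep5 : ∀ η ∈ Set.Icc a b, x η 5 = x a 5 * Real.exp (∫ s in a..η, c5f s) := by
      apply Spin7Aux.exp_repr hab hc5c
      intro η hη
      have h := hd 5 η hη
      rw [hF5] at h
      convert h using 1
      simp only [hc5def, hxedef]
      rw [hπeq η hη]; ring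
    have hrep6 : ∀ η ∈ Set.Icc a b, x η 6 = x a 6 * Real.exp (∫ s in a..η, c6f s) := by
      apply Spin7Aux.exp_repr hab hc6c
      intro η hη
      have h := hd 6 η hη
      rw [hF6] at h
      convert h using 1
      simp only [hc6def, hxedef]
      rw [hπeq η hη]; ring
    have hrep7 : ∀ η ∈ Set.Icc a b, x η 7 = x a 7 * Real.exp (∫ s in a..η, c7f s) := by
      apply Spin7Aux.exp_repr hab hc7c
      intro η hη
      have h := hd 7 η hη
      rw [hF7] at h
      convert h using 1
      simp only [hc7def, hxedef]
      rw [hπeq η hη]; ring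
    set C4 : ℝ → ℝ := fun η => ∫ s in a..η, c4f s with hC4def
    set C5 : ℝ → ℝ := fun η => ∫ s in a..η, c5f s with hC5def
    set C6 : ℝ → ℝ := fun η => ∫ s in a..η, c6f s with hC6def
    set C7 : ℝ → ℝ := fun η => ∫ s in a..η, c7f s with hC7def
    have hC4d : ∀ t, HasDerivAt C4 (c4f t) t := fun t => Spin7Aux.integral_hasDerivAt hc4c a t
    have hC5d : ∀ t, HasDerivAt C5 (c5f t) t := fun t => Spin7Aux.integral_hasDerivAt hc5c a t
    have hC6d : ∀ t, HasDerivAt C6 (c6f t) t := fun t => Spin7Aux.integral_hasDerivAt hc6c a t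
    have hC7d : ∀ t, HasDerivAt C7 (c7f t) t := fun t => Spin7Aux.integral_hasDerivAt hc7c a t
    have hC4a : C4 a = 0 := intervalIntegral.integral_same
    have hC5a : C5 a = 0 := intervalIntegral.integral_same
    have hC6a : C6 a = 0 := intervalIntegral.integral_same
    have hC7a : C7 a = 0 := intervalIntegral.integral_same
    obtain ⟨h4a, h5a, h6a, h7a, _, _, _, _, _⟩ := hspin a (Set.left_mem_Icc.mpr hab)
    have hs1 : ∀ η ∈ Set.Icc a b, Real.sqrt (x η 4 * x η 5)
        = Real.sqrt (x a 4 * x a 5) * Real.exp ((C4 η + C5 η)/2) := by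
      intro η hη
      rw [hrep4 η hη, hrep5 η hη,
        show x a 4 * Real.exp (C4 η) * (x a 5 * Real.exp (C5 η))
          = x a 4 * x a 5 * Real.exp (C4 η + C5 η) from by rw [Real.exp_add]; ring,
        Real.sqrt_mul (mul_nonneg h4a h5a), Spin7Aux.sqrt_exp]
    have hs2 : ∀ η ∈ Set.Icc a b, Real.sqrt (x η 4 * x η 6)
        = Real.sqrt (x a 4 * x a 6) * Real.exp ((C4 η + C6 η)/2) := by
      intro η hη
      rw [hrep4 η hη, hrep6 η hη,
        show x a 4 * Real.exp (C4 η) * (x a 6 * Real.exp (C6 η))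
          = x a 4 * x a 6 * Real.exp (C4 η + C6 η) from by rw [Real.exp_add]; ring,
        Real.sqrt_mul (mul_nonneg h4a h6a), Spin7Aux.sqrt_exp]
    have hs3 : ∀ η ∈ Set.Icc a b, Real.sqrt (x η 5 * x η 6)
        = Real.sqrt (x a 5 * x a 6) * Real.exp ((C5 η + C6 η)/2) := by
      intro η hη
      rw [hrep5 η hη, hrep6 η hη,
        show x a 5 * Real.exp (C5 η) * (x a 6 * Real.exp (C6 η))
          = x a 5 * x a 6 * Real.exp (C5 η + C6 η) from by rw [Real.exp_add]; ring,
        Real.sqrt_mul (mul_nonneg h5a h6a), Spin7Aux.sqrt_exp]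
    by_cases hAa : 0 < (k:ℝ)*Real.sqrt (x a 4 * x a 5) + (l:ℝ)*Real.sqrt (x a 4 * x a 6)
        + ((k:ℝ)+l)*Real.sqrt (x a 5 * x a 6)
    · -- main case: A > 0 along the trajectory
      have hterm : 0 < (k:ℝ)*Real.sqrt (x a 4 * x a 5) ∨ 0 < (l:ℝ)*Real.sqrt (x a 4 * x a 6)
          ∨ 0 < ((k:ℝ)+l)*Real.sqrt (x a 5 * x a 6) := by
        by_contra hcon
        push_neg at hcon
        obtain ⟨u1, u2, u3⟩ := hcon
        linarith
      have hApos : ∀ η ∈ Set.Icc a b,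
          0 < (k:ℝ)*Real.sqrt (x η 4 * x η 5) + (l:ℝ)*Real.sqrt (x η 4 * x η 6)
            + ((k:ℝ)+l)*Real.sqrt (x η 5 * x η 6) := by
        intro η hη
        rw [hs1 η hη, hs2 η hη, hs3 η hη]
        have w1 : 0 ≤ (k:ℝ)*Real.sqrt (x a 4 * x a 5) :=
          mul_nonneg hk0 (Real.sqrt_nonneg _)
        have w2 : 0 ≤ (l:ℝ)*Real.sqrt (x a 4 * x a 6) :=
          mul_nonneg hl0 (Real.sqrt_nonneg _)
        have w3 : 0 ≤ ((k:ℝ)+l)*Real.sqrt (x a 5 * x a 6) :=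
          mul_nonneg (by linarith) (Real.sqrt_nonneg _)
        have p1 := Real.exp_pos ((C4 η + C5 η)/2)
        have p2 := Real.exp_pos ((C4 η + C6 η)/2)
        have p3 := Real.exp_pos ((C5 η + C6 η)/2)
        rcases hterm with h|h|h
        · nlinarith
        · nlinarith
        · nlinarith
      -- the continuous coefficient function for the comparison argument
      set s4 : ℝ → ℝ := fun t => Real.sqrt (xe t 4) with hs4def
      set s5 : ℝ → ℝ := fun t => Real.sqrt (xe t 5) with hs5def
      set s6 : ℝ → ℝ := fun t => Real.sqrt (xe t 6) with hs6def
      have hs4c : Continuous s4 := Real.continuous_sqrt.comp (hxei 4)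
      have hs5c : Continuous s5 := Real.continuous_sqrt.comp (hxei 5)
      have hs6c : Continuous s6 := Real.continuous_sqrt.comp (hxei 6)
      set Af : ℝ → ℝ := fun t => (k:ℝ)*(s4 t*s5 t) + (l:ℝ)*(s4 t*s6 t) + ((k:ℝ)+l)*(s5 t*s6 t)
        with hAfdef
      have hAfc : Continuous Af :=
        ((continuous_const.mul (hs4c.mul hs5c)).add (continuous_const.mul (hs4c.mul hs6c))).add
          (continuous_const.mul (hs5c.mul hs6c))
      have hAfpos : ∀ t, 0 < Af t := by
        intro t
        obtain ⟨g4, g5, g6, g7, _, _, _, _, _⟩ := hspin (π t) (hπmem t)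
        have q1 : s4 t*s5 t = Real.sqrt (x (π t) 4 * x (π t) 5) := by
          simp only [hs4def, hs5def, hxedef]; rw [Real.sqrt_mul g4]
        have q2 : s4 t*s6 t = Real.sqrt (x (π t) 4 * x (π t) 6) := by
          simp only [hs4def, hs6def, hxedef]; rw [Real.sqrt_mul g4]
        have q3 : s5 t*s6 t = Real.sqrt (x (π t) 5 * x (π t) 6) := by
          simp only [hs5def, hs6def, hxedef]; rw [Real.sqrt_mul g5]
        simp only [hAfdef]
        rw [q1, q2, q3]
        exact hApos (π t) (hπmem t)
      set Qf : ℝ → ℝ := fun t => ((k:ℝ)+l)*(s5 t)^2*(s6 t)^2 - (l:ℝ)*(s4 t)^2*(s6 t)^2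
        - (k:ℝ)*(s4 t)^2*(s5 t)^2 with hQfdef
      set Pf : ℝ → ℝ := fun t => ((k:ℝ)+l)^2*(s5 t)^3*(s6 t)^3 - (l:ℝ)^2*(s4 t)^3*(s6 t)^3
        - (k:ℝ)^2*(s4 t)^3*(s5 t)^3 with hPfdef
      have hQfc : Continuous Qf := by
        apply Continuous.sub
        apply Continuous.sub
        · exact (continuous_const.mul (hs5c.pow 2)).mul (hs6c.pow 2)
        · exact (continuous_const.mul (hs4c.pow 2)).mul (hs6c.pow 2)
        · exact (continuous_const.mul (hs4c.pow 2)).mul (hs5c.pow 2)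
      have hPfc : Continuous Pf := by
        apply Continuous.sub
        apply Continuous.sub
        · exact (continuous_const.mul (hs5c.pow 3)).mul (hs6c.pow 3)
        · exact (continuous_const.mul (hs4c.pow 3)).mul (hs6c.pow 3)
        · exact (continuous_const.mul (hs4c.pow 3)).mul (hs5c.pow 3)
      set cf : ℝ → ℝ := fun t =>
        xe t 7 * (Af t*Qf t + 2*Pf t)/(4*Δ k l*Af t)
          + (2*((s4 t)^2+(s5 t)^2+(s6 t)^2)-1)/2 with hcfdef
      have hcfc : Continuous cf := by
        apply Continuous.add
        · apply Continuous.div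
          · exact (hxei 7).mul ((hAfc.mul hQfc).add (continuous_const.mul hPfc))
          · exact continuous_const.mul hAfc
          · intro t
            have := hAfpos t
            positivity
        · exact (continuous_const.mul
            ((((hs4c.pow 2).add (hs5c.pow 2)).add (hs6c.pow 2)))).sub continuous_const |>.div_const 2
      -- the function W - 2Δ and its derivative
      set D1 : ℝ → ℝ := fun η => (C4 η + C5 η)/2 + C7 η with hD1def
      set D2 : ℝ → ℝ := fun η => (C4 η + C6 η)/2 + C7 η with hD2def
      set D3 : ℝ → ℝ := fun η => (C5 η + C6 η)/2 + C7 η with hD3def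
      set K1 : ℝ := Real.sqrt (x a 4 * x a 5) * x a 7 with hK1def
      set K2 : ℝ := Real.sqrt (x a 4 * x a 6) * x a 7 with hK2def
      set K3 : ℝ := Real.sqrt (x a 5 * x a 6) * x a 7 with hK3def
      have hs1' : ∀ η ∈ Set.Icc a b,
          Real.sqrt (x η 4 * x η 5) * x η 7 = K1 * Real.exp (D1 η) := by
        intro η hη
        rw [hs1 η hη, hrep7 η hη]
        simp only [hK1def, hD1def]
        rw [Real.exp_add]; ring
      have hs2' : ∀ η ∈ Set.Icc a b,
          Real.sqrt (x η 4 * x η 6) * x η 7 = K2 * Real.exp (D2 η) := by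
        intro η hη
        rw [hs2 η hη, hrep7 η hη]
        simp only [hK2def, hD2def]
        rw [Real.exp_add]; ring
      have hs3' : ∀ η ∈ Set.Icc a b,
          Real.sqrt (x η 5 * x η 6) * x η 7 = K3 * Real.exp (D3 η) := by
        intro η hη
        rw [hs3 η hη, hrep7 η hη]
        simp only [hK3def, hD3def]
        rw [Real.exp_add]; ring
      set Wf : ℝ → ℝ := fun η => (k:ℝ)*K1*Real.exp (D1 η) + (l:ℝ)*K2*Real.exp (D2 η)
        + ((k:ℝ)+l)*K3*Real.exp (D3 η) - 2*Δ k l with hWfdef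
      set dW : ℝ → ℝ := fun η =>
        (k:ℝ)*K1*(Real.exp (D1 η)*((c4f η + c5f η)/2 + c7f η))
        + (l:ℝ)*K2*(Real.exp (D2 η)*((c4f η + c6f η)/2 + c7f η))
        + ((k:ℝ)+l)*K3*(Real.exp (D3 η)*((c5f η + c6f η)/2 + c7f η)) with hdWdef
      have hWfd : ∀ η, HasDerivAt Wf (dW η) η := by
        intro η
        have hD1d : HasDerivAt D1 ((c4f η + c5f η)/2 + c7f η) η :=
          (((hC4d η).add (hC5d η)).div_const 2).add (hC7d η)
        have hD2d : HasDerivAt D2 ((c4f η + c6f η)/2 + c7f η) η :=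
          (((hC4d η).add (hC6d η)).div_const 2).add (hC7d η)
        have hD3d : HasDerivAt D3 ((c5f η + c6f η)/2 + c7f η) η :=
          (((hC5d η).add (hC6d η)).div_const 2).add (hC7d η)
        exact ((((hD1d.exp).const_mul ((k:ℝ)*K1)).add
          ((hD2d.exp).const_mul ((l:ℝ)*K2))).add
          ((hD3d.exp).const_mul (((k:ℝ)+l)*K3))).sub_const (2*Δ k l)
      have hWa : Wf a ≤ 0 := by
        simp only [hWfdef, hD1def, hD2def, hD3def, hC4a, hC5a, hC6a, hC7a, hK1def, hK2def, hK3def]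
        norm_num
        nlinarith [h3a]
      have hle : ∀ η ∈ Set.Icc a b, dW η ≤ cf η * Wf η := by
        intro η hη
        obtain ⟨h4, h5, h6, h7, e0, e1, e2, e3, elin⟩ := hspin η hη
        have r1 : K1 * Real.exp (D1 η) = Real.sqrt (x η 4) * Real.sqrt (x η 5) * x η 7 := by
          rw [← hs1' η hη, Real.sqrt_mul h4]
        have r2 : K2 * Real.exp (D2 η) = Real.sqrt (x η 4) * Real.sqrt (x η 6) * x η 7 := by
          rw [← hs2' η hη, Real.sqrt_mul h4]
        have r3 : K3 * Real.exp (D3 η) = Real.sqrt (x η 5) * Real.sqrt (x η 6) * x η 7 := by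
          rw [← hs3' η hη, Real.sqrt_mul h5]
        have d1eq : (c4f η + c5f η)/2 + c7f η = x η 3 - x η 2 := by
          simp only [hc4def, hc5def, hc7def, hxedef]; rw [hπeq η hη]; ring
        have d2eq : (c4f η + c6f η)/2 + c7f η = x η 3 - x η 1 := by
          simp only [hc4def, hc6def, hc7def, hxedef]; rw [hπeq η hη]; ring
        have d3eq : (c5f η + c6f η)/2 + c7f η = x η 3 - x η 0 := by
          simp only [hc5def, hc6def, hc7def, hxedef]; rw [hπeq η hη]; ring
        have hA' : 0 < (k:ℝ)*(Real.sqrt (x η 4)*Real.sqrt (x η 5))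
            + (l:ℝ)*(Real.sqrt (x η 4)*Real.sqrt (x η 6))
            + ((k:ℝ)+l)*(Real.sqrt (x η 5)*Real.sqrt (x η 6)) := by
          have h := hApos η hη
          rw [Real.sqrt_mul h4 (x η 5), Real.sqrt_mul h4 (x η 6), Real.sqrt_mul h5 (x η 6)] at h
          exact h
        have hceq : cf η = x η 7 * (((k:ℝ)*(Real.sqrt (x η 4)*Real.sqrt (x η 5))
              + (l:ℝ)*(Real.sqrt (x η 4)*Real.sqrt (x η 6))
              + ((k:ℝ)+l)*(Real.sqrt (x η 5)*Real.sqrt (x η 6)))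
              *(((k:ℝ)+l)*Real.sqrt (x η 5)^2*Real.sqrt (x η 6)^2
                - (l:ℝ)*Real.sqrt (x η 4)^2*Real.sqrt (x η 6)^2
                - (k:ℝ)*Real.sqrt (x η 4)^2*Real.sqrt (x η 5)^2)
            + 2*(((k:ℝ)+l)^2*Real.sqrt (x η 5)^3*Real.sqrt (x η 6)^3
                - (l:ℝ)^2*Real.sqrt (x η 4)^3*Real.sqrt (x η 6)^3
                - (k:ℝ)^2*Real.sqrt (x η 4)^3*Real.sqrt (x η 5)^3))
            /(4*Δ k l*((k:ℝ)*(Real.sqrt (x η 4)*Real.sqrt (x η 5))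
              + (l:ℝ)*(Real.sqrt (x η 4)*Real.sqrt (x η 6))
              + ((k:ℝ)+l)*(Real.sqrt (x η 5)*Real.sqrt (x η 6))))
            + (2*(Real.sqrt (x η 4)^2+Real.sqrt (x η 5)^2+Real.sqrt (x η 6)^2)-1)/2 := by
          simp only [hcfdef, hAfdef, hQfdef, hPfdef, hs4def, hs5def, hs6def, hxedef]
          rw [hπeq η hη]
        have hkey := Spin7Aux.key (k:ℝ) (l:ℝ) (Δ k l) (x η 4) (x η 5) (x η 6) (x η 7)
          (Real.sqrt (x η 4)) (Real.sqrt (x η 5)) (Real.sqrt (x η 6))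
          (x η 0) (x η 1) (x η 2) (x η 3) (cf η)
          hΔ hk0 hl0 (Real.sq_sqrt h4) (Real.sq_sqrt h5) (Real.sq_sqrt h6)
          (Real.sqrt_nonneg _) h7
          (Real.sqrt_le_sqrt (by linarith [hmono1 η hη]))
          (Real.sqrt_le_sqrt (by linarith [hmono2 η hη]))
          hA' e0 e1 e2 e3 elin hceq
        have hWeq : Wf η = ((k:ℝ)*(Real.sqrt (x η 4)*Real.sqrt (x η 5))
            + (l:ℝ)*(Real.sqrt (x η 4)*Real.sqrt (x η 6))
            + ((k:ℝ)+l)*(Real.sqrt (x η 5)*Real.sqrt (x η 6)))*(x η 7) - 2*Δ k l := by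
          simp only [hWfdef]
          linear_combination (k:ℝ)*r1 + (l:ℝ)*r2 + ((k:ℝ)+l)*r3
        have hdWeq : dW η = (k:ℝ)*(Real.sqrt (x η 4)*Real.sqrt (x η 5))*(x η 7)*(x η 3 - x η 2)
            + (l:ℝ)*(Real.sqrt (x η 4)*Real.sqrt (x η 6))*(x η 7)*(x η 3 - x η 1)
            + ((k:ℝ)+l)*(Real.sqrt (x η 5)*Real.sqrt (x η 6))*(x η 7)*(x η 3 - x η 0) := by
          simp only [hdWdef]
          rw [d1eq, d2eq, d3eq]
          linear_combination ((k:ℝ)*(x η 3 - x η 2))*r1 + ((l:ℝ)*(x η 3 - x η 1))*r2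
            + (((k:ℝ)+l)*(x η 3 - x η 0))*r3
        rw [hdWeq, hWeq]
        exact hkey
      have hcomp := Spin7Aux.comparison hab hcfc (fun η _ => hWfd η) hle hWa
      intro η hη
      have hWη := hcomp η hη
      have w : Wf η = ((k : ℝ) * Real.sqrt (x η 4 * x η 5) + (l : ℝ) * Real.sqrt (x η 4 * x η 6)
          + ((k : ℝ) + l) * Real.sqrt (x η 5 * x η 6)) * x η 7 - 2*Δ k l := by
        simp only [hWfdef]
        linear_combination (-(k:ℝ))*(hs1' η hη) - (l:ℝ)*(hs2' η hη) - ((k:ℝ)+l)*(hs3' η hη)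
      linarith [w, hWη]
    · -- degenerate case: A ≡ 0, the quantity vanishes identically
      push_neg at hAa
      have s1 : 0 ≤ Real.sqrt (x a 4 * x a 5) := Real.sqrt_nonneg _
      have s2 : 0 ≤ Real.sqrt (x a 4 * x a 6) := Real.sqrt_nonneg _
      have s3 : 0 ≤ Real.sqrt (x a 5 * x a 6) := Real.sqrt_nonneg _
      have hk1 : (1:ℝ) ≤ (k:ℝ) := by exact_mod_cast hk
      have hl1 : (1:ℝ) ≤ (l:ℝ) := by exact_mod_cast hl
      have t1 : Real.sqrt (x a 4 * x a 5) = 0 := by nlinarith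
      have t2 : Real.sqrt (x a 4 * x a 6) = 0 := by nlinarith
      have t3 : Real.sqrt (x a 5 * x a 6) = 0 := by nlinarith
      intro η hη
      rw [hs1 η hη, hs2 η hη, hs3 η hη, t1, t2, t3]
      simp only [zero_mul, mul_zero, add_zero, zero_add]
      linarith
  intro η hη
  exact ⟨by linarith [hmono1 η hη], by linarith [hmono2 η hη], hW η hη⟩
end
end

section
/- Let x : ℝ → ℝ⁸ be a solution of the system on [a,b] such that x(η) satisfies the Spin(7)⁻ constraints for every η ∈ [a,b]. If at η = a one has Z₁ ≥ Z₂, Z₁ ≥ Z₃, and (k·√(Z₁Z₂) + l·√(Z₁Z₃) + (k+l)·√(Z₂Z₃))·Z₄ ≤ 2Δ, then these three inequalities hold at x(η) for every η ∈ [a,b]. (Lemma 4.2: the set 𝒟⁻ is invariant.) -/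
noncomputable section

namespace Spin7

/-- The Spin(7)⁻ constraints (equations (2.14), 𝒞⁻). -/
def SpinMinus (k l : ℕ) (p : Fin 8 → ℝ) : Prop :=
  0 ≤ p 4 ∧ 0 ≤ p 5 ∧ 0 ≤ p 6 ∧ 0 ≤ p 7 ∧
  p 0 = p 5 + p 6 - p 4 + ((k : ℝ) + l)/(2*Δ k l) * (p 5) * (p 6) * (p 7) ∧
  p 1 = p 6 + p 4 - p 5 - (l : ℝ)/(2*Δ k l) * (p 4) * (p 6) * (p 7) ∧
  p 2 = p 4 + p 5 - p 6 - (k : ℝ)/(2*Δ k l) * (p 4) * (p 5) * (p 7) ∧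
  p 3 = -(((k : ℝ) + l)/(2*Δ k l)) * (p 5) * (p 6) * (p 7)
      + (l : ℝ)/(2*Δ k l) * (p 4) * (p 6) * (p 7)
      + (k : ℝ)/(2*Δ k l) * (p 4) * (p 5) * (p 7) ∧
  2*(p 4 + p 5 + p 6) - p 3 = 1

end Spin7

namespace Spin7Aux
open Set

/-- Forward invariance of `{w ≥ 0}` under `w' ≥ K·w` in the region `w ≤ 0`. -/
lemma invariant_nonneg {w d : ℝ → ℝ} {a b K : ℝ}
    (hw : ContinuousOn w (Icc a b))
    (hd : ∀ η ∈ Ioo a b, HasDerivAt w (d η) η)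
    (hineq : ∀ η ∈ Ioo a b, w η ≤ 0 → K * w η ≤ d η)
    (ha : 0 ≤ w a) : ∀ η ∈ Icc a b, 0 ≤ w η := by
  by_contra hcon
  push_neg at hcon
  obtain ⟨t0, ht0, hwt0⟩ := hcon
  have hat0 : a < t0 := by
    rcases eq_or_lt_of_le ht0.1 with h | h
    · exfalso; rw [← h] at hwt0; linarith
    · exact h
  set S0 : Set ℝ := Icc a t0 ∩ w ⁻¹' (Ici 0) with hS0def
  have hsub : Icc a t0 ⊆ Icc a b := Icc_subset_Icc le_rfl ht0.2
  have hclosed : IsClosed S0 :=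
    (hw.mono hsub).preimage_isClosed_of_isClosed isClosed_Icc isClosed_Ici
  have hne : S0.Nonempty := ⟨a, ⟨le_rfl, hat0.le⟩, ha⟩
  have hbdd : BddAbove S0 := ⟨t0, fun y hy => hy.1.2⟩
  have hsmem : sSup S0 ∈ S0 := hclosed.csSup_mem hne hbdd
  set s := sSup S0 with hs
  have hsa : a ≤ s := hsmem.1.1
  have hst0 : s ≤ t0 := hsmem.1.2
  have hws : (0:ℝ) ≤ w s := hsmem.2
  have hslt : s < t0 := by
    rcases eq_or_lt_of_le hst0 with h | h
    · exfalso; rw [h] at hws; linarith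
    · exact h
  have hneg : ∀ η ∈ Ioc s t0, w η < 0 := by
    intro η hη
    by_contra hc
    push_neg at hc
    have hmem : η ∈ S0 := ⟨⟨hsa.trans hη.1.le, hη.2⟩, hc⟩
    exact absurd (le_csSup hbdd hmem) (not_le.2 hη.1)
  set g : ℝ → ℝ := fun η => Real.exp (-K * η) * w η with hg
  have hgd : ∀ η ∈ Ioo s t0,
      HasDerivAt g (Real.exp (-K * η) * (-K) * w η + Real.exp (-K * η) * d η) η := by
    intro η hη
    have hηab : η ∈ Ioo a b := ⟨lt_of_le_of_lt hsa hη.1, lt_of_lt_of_le hη.2 ht0.2⟩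
    have h1 : HasDerivAt (fun η : ℝ => Real.exp (-K * η)) (Real.exp (-K * η) * (-K)) η := by
      have := ((hasDerivAt_id η).const_mul (-K)).exp
      simpa [mul_comm] using this
    exact h1.mul (hd η hηab)
  have hmono : MonotoneOn g (Icc s t0) := by
    apply monotoneOn_of_deriv_nonneg (convex_Icc s t0)
    · exact ((Real.continuous_exp.comp (continuous_const.mul continuous_id)).continuousOn).mul
        (hw.mono (Icc_subset_Icc hsa ht0.2))
    · intro η hη
      rw [interior_Icc] at hη
      exact ((hgd η hη).differentiableAt).differentiableWithinAt
    · intro η hη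
      rw [interior_Icc] at hη
      rw [(hgd η hη).deriv]
      have hηab : η ∈ Ioo a b := ⟨lt_of_le_of_lt hsa hη.1, lt_of_lt_of_le hη.2 ht0.2⟩
      have hwη : w η ≤ 0 := (hneg η ⟨hη.1, hη.2.le⟩).le
      have hKw := hineq η hηab hwη
      have hexp : (0:ℝ) < Real.exp (-K * η) := Real.exp_pos _
      nlinarith [mul_le_mul_of_nonneg_left hKw hexp.le]
  have hgle := hmono (left_mem_Icc.2 hslt.le) (right_mem_Icc.2 hslt.le) hslt.le
  simp only [hg] at hgle
  have hgs : 0 ≤ Real.exp (-K * s) * w s := mul_nonneg (Real.exp_pos _).le hws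
  have hgt : Real.exp (-K * t0) * w t0 < 0 := mul_neg_of_pos_of_neg (Real.exp_pos _) hwt0
  linarith

/-- Backward version. -/
lemma invariant_nonneg_rev {w d : ℝ → ℝ} {a b K : ℝ}
    (hw : ContinuousOn w (Icc a b))
    (hd : ∀ η ∈ Ioo a b, HasDerivAt w (d η) η)
    (hineq : ∀ η ∈ Ioo a b, w η ≤ 0 → d η ≤ -K * w η)
    (hb : 0 ≤ w b) : ∀ η ∈ Icc a b, 0 ≤ w η := by
  intro η hη
  have key : ∀ σ ∈ Icc a b, 0 ≤ w (a + b - σ) := by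
    apply invariant_nonneg (d := fun s => -d (a + b - s)) (K := K)
    · apply hw.comp (continuous_const.sub continuous_id).continuousOn
      intro s hs
      exact ⟨by simp at hs ⊢; linarith [hs.1, hs.2], by simp at hs ⊢; linarith [hs.1, hs.2]⟩
    · intro s hs
      have hσ : a + b - s ∈ Ioo a b := ⟨by linarith [hs.1, hs.2], by linarith [hs.1, hs.2]⟩
      have h2 : HasDerivAt (fun u : ℝ => a + b - u) (-1) s := by
        simpa using (hasDerivAt_id s).const_sub (a + b)
      have := (hd _ hσ).comp s h2
      rw [mul_neg_one] at this; exact this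
    · intro s hs hws
      have hσ : a + b - s ∈ Ioo a b := ⟨by linarith [hs.1, hs.2], by linarith [hs.1, hs.2]⟩
      have := hineq _ hσ hws
      linarith
    · have : a + b - a = b := by ring
      rw [this]; exact hb
  have := key (a + b - η) ⟨by linarith [hη.1, hη.2], by linarith [hη.1, hη.2]⟩
  have he : a + b - (a + b - η) = η := by ring
  rwa [he] at this

/-- A nonnegative solution of `z' = z·g` with `g` bounded is either everywhere positive
or identically zero. -/
lemma zero_or_pos {z g : ℝ → ℝ} {a b K : ℝ}
    (hz : ContinuousOn z (Icc a b))
    (hd : ∀ η ∈ Ioo a b, HasDerivAt z (z η * g η) η)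
    (hK : ∀ η ∈ Ioo a b, |g η| ≤ K)
    (hnn : ∀ η ∈ Icc a b, 0 ≤ z η) :
    (∀ η ∈ Icc a b, 0 < z η) ∨ (∀ η ∈ Icc a b, z η = 0) := by
  by_cases hc : ∃ c ∈ Icc a b, z c = 0
  · right
    obtain ⟨c, hcab, hzc⟩ := hc
    intro η hη
    rcases le_total η c with hle | hge
    · have hz' : ∀ σ ∈ Icc a c, 0 ≤ -z σ := by
        apply invariant_nonneg_rev (d := fun s => -(z s * g s)) (K := K)
        · exact (hz.mono (Icc_subset_Icc le_rfl hcab.2)).neg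
        · intro s hs
          have hs' : s ∈ Ioo a b := ⟨hs.1, lt_of_lt_of_le hs.2 hcab.2⟩
          exact (hd s hs').neg
        · intro s hs _
          have hs' : s ∈ Ioo a b := ⟨hs.1, lt_of_lt_of_le hs.2 hcab.2⟩
          have h1 : 0 ≤ z s := hnn s ⟨hs.1.le, hs.2.le.trans hcab.2⟩
          have h2 := (abs_le.mp (hK s hs')).1
          nlinarith
        · rw [hzc]; norm_num
      have h1 := hz' η ⟨hη.1, hle⟩
      have h2 := hnn η hη
      linarith
    · have hz' : ∀ σ ∈ Icc c b, 0 ≤ -z σ := by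
        apply invariant_nonneg (d := fun s => -(z s * g s)) (K := K)
        · exact (hz.mono (Icc_subset_Icc hcab.1 le_rfl)).neg
        · intro s hs
          have hs' : s ∈ Ioo a b := ⟨lt_of_le_of_lt hcab.1 hs.1, hs.2⟩
          exact (hd s hs').neg
        · intro s hs _
          have hs' : s ∈ Ioo a b := ⟨lt_of_le_of_lt hcab.1 hs.1, hs.2⟩
          have h1 : 0 ≤ z s := hnn s ⟨hcab.1.trans hs.1.le, hs.2.le⟩
          have h2 := (abs_le.mp (hK s hs')).2
          nlinarith
        · rw [hzc]; norm_num
      have h1 := hz' η ⟨hge, hη.2⟩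
      have h2 := hnn η hη
      linarith
  · left
    intro η hη
    push_neg at hc
    exact lt_of_le_of_ne (hnn η hη) (fun h => hc η hη h.symm)

end Spin7Aux

namespace Spin7Aux
open Set

lemma polyJ (p q r : ℝ) (hq : 0 ≤ q) (hr : 0 ≤ r) (hpq : q ≤ p) (hpr : r ≤ p) :
    0 ≤ 2*p^4 - p^3*q - p^3*r - p^2*q^2 - 2*p^2*q*r - p^2*r^2
      + 2*p*q^3 + p*q^2*r + p*q*r^2 + 2*p*r^3 + 2*q^3*r + 4*q^2*r^2 + 2*q*r^3 := by
  nlinarith [mul_nonneg (mul_nonneg (sub_nonneg.2 hpq) (sub_nonneg.2 hpr)) (sq_nonneg (p+q+r)),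
    sq_nonneg (p-q), sq_nonneg (p-r), sq_nonneg (q-r), mul_nonneg hq hr,
    mul_nonneg (sub_nonneg.2 hpq) hr, mul_nonneg (sub_nonneg.2 hpr) hq,
    mul_nonneg (mul_nonneg (sub_nonneg.2 hpq) (sub_nonneg.2 hpq)) (sq_nonneg p),
    mul_nonneg (mul_nonneg (sub_nonneg.2 hpr) (sub_nonneg.2 hpr)) (sq_nonneg p),
    mul_nonneg (mul_nonneg (sub_nonneg.2 hpq) hq) (sq_nonneg p),
    mul_nonneg (mul_nonneg (sub_nonneg.2 hpr) hr) (sq_nonneg p)]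

lemma key_ineq (k l p q r : ℝ) (hk : 0 ≤ k) (hl : 0 ≤ l) (hq : 0 ≤ q) (hr : 0 ≤ r)
    (hpq : q ≤ p) (hpr : r ≤ p) :
    (k*p*q + l*p*r + (k+l)*q*r) *
        (-(k*p*q + l*p*r + (k+l)*q*r)*(p^2+q^2+r^2) + 2*p*q*r*(k*r + l*q + (k+l)*p))
      + (k*(p*q)*(l*(p^2*r^2) + 2*k*(p^2*q^2) - (k+l)*(q^2*r^2))
         + l*(p*r)*(2*l*(p^2*r^2) + k*(p^2*q^2) - (k+l)*(q^2*r^2))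
         + (k+l)*(q*r)*(l*(p^2*r^2) + k*(p^2*q^2) - 2*(k+l)*(q^2*r^2))) ≤ 0 := by
  have hp : 0 ≤ p := hq.trans hpq
  have h1 : 0 ≤ q^2*((p^2 - p*q - r^2 - q*r)^2 + p*q*r*(p-r)) :=
    mul_nonneg (sq_nonneg q) (add_nonneg (sq_nonneg _)
      (mul_nonneg (mul_nonneg (mul_nonneg hp hq) hr) (sub_nonneg.2 hpr)))
  have h2 : 0 ≤ r^2*((p^2 - p*r - q^2 - q*r)^2 + p*q*r*(p-q)) :=
    mul_nonneg (sq_nonneg r) (add_nonneg (sq_nonneg _)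
      (mul_nonneg (mul_nonneg (mul_nonneg hp hq) hr) (sub_nonneg.2 hpq)))
  have h3 := polyJ p q r hq hr hpq hpr
  have e : (k*p*q + l*p*r + (k+l)*q*r) *
        (-(k*p*q + l*p*r + (k+l)*q*r)*(p^2+q^2+r^2) + 2*p*q*r*(k*r + l*q + (k+l)*p))
      + (k*(p*q)*(l*(p^2*r^2) + 2*k*(p^2*q^2) - (k+l)*(q^2*r^2))
         + l*(p*r)*(2*l*(p^2*r^2) + k*(p^2*q^2) - (k+l)*(q^2*r^2))
         + (k+l)*(q*r)*(l*(p^2*r^2) + k*(p^2*q^2) - 2*(k+l)*(q^2*r^2)))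
      = -(k^2*(q^2*((p^2 - p*q - r^2 - q*r)^2 + p*q*r*(p-r))))
        - (k*l)*((q*r)*(2*p^4 - p^3*q - p^3*r - p^2*q^2 - 2*p^2*q*r - p^2*r^2
            + 2*p*q^3 + p*q^2*r + p*q*r^2 + 2*p*r^3 + 2*q^3*r + 4*q^2*r^2 + 2*q*r^3))
        - (l^2*(r^2*((p^2 - p*r - q^2 - q*r)^2 + p*q*r*(p-q)))) := by ring
  rw [e]
  have t1 : 0 ≤ k^2*(q^2*((p^2 - p*q - r^2 - q*r)^2 + p*q*r*(p-r))) :=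
    mul_nonneg (sq_nonneg k) h1
  have t3 : 0 ≤ l^2*(r^2*((p^2 - p*r - q^2 - q*r)^2 + p*q*r*(p-q))) :=
    mul_nonneg (sq_nonneg l) h2
  have t2 : 0 ≤ (k*l)*((q*r)*(2*p^4 - p^3*q - p^3*r - p^2*q^2 - 2*p^2*q*r - p^2*r^2
      + 2*p*q^3 + p*q^2*r + p*q*r^2 + 2*p*r^3 + 2*q^3*r + 4*q^2*r^2 + 2*q*r^3)) :=
    mul_nonneg (mul_nonneg hk hl) (mul_nonneg (mul_nonneg hq hr) h3)
  linarith

lemma sqrt_term_deriv_pos {u v z : ℝ → ℝ} {α β γ t : ℝ}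
    (hu : HasDerivAt u (u t * α) t) (hv : HasDerivAt v (v t * β) t)
    (hz : HasDerivAt z (z t * γ) t) (hut : 0 < u t) (hvt : 0 < v t) :
    HasDerivAt (fun s => Real.sqrt (u s * v s) * z s)
      (Real.sqrt (u t * v t) * z t * ((α + β)/2 + γ)) t := by
  have huv : (0:ℝ) < u t * v t := mul_pos hut hvt
  have hsq := (hu.mul hv).sqrt (ne_of_gt huv)
  have h := hsq.mul hz
  have hs : (0:ℝ) < Real.sqrt (u t * v t) := Real.sqrt_pos.mpr huv
  have hsq2 : Real.sqrt (u t * v t) ^ 2 = u t * v t := Real.sq_sqrt huv.le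
  have he : (u t * α * v t + u t * (v t * β)) / (2 * Real.sqrt (u t * v t))
      = Real.sqrt (u t * v t) * ((α + β)/2) := by
    rw [div_eq_iff (by positivity)]
    linear_combination (-(α + β)) * hsq2
  simp only [Pi.mul_apply] at h
  rw [he] at h
  refine h.congr_deriv ?_
  ring

lemma sqrt_term_deriv_zero_right {u v z : ℝ → ℝ} {a b t : ℝ} (ht : t ∈ Ioo a b)
    (hv : ∀ s ∈ Icc a b, v s = 0) :
    HasDerivAt (fun s => Real.sqrt (u s * v s) * z s) 0 t := by
  have hev : (fun s => Real.sqrt (u s * v s) * z s) =ᶠ[nhds t] fun _ => (0:ℝ) := by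
    filter_upwards [Ioo_mem_nhds ht.1 ht.2] with s hs
    rw [hv s ⟨hs.1.le, hs.2.le⟩]
    simp
  exact (hasDerivAt_const t (0:ℝ)).congr_of_eventuallyEq hev

lemma sqrt_term_deriv_zero_left {u v z : ℝ → ℝ} {a b t : ℝ} (ht : t ∈ Ioo a b)
    (hu : ∀ s ∈ Icc a b, u s = 0) :
    HasDerivAt (fun s => Real.sqrt (u s * v s) * z s) 0 t := by
  have hev : (fun s => Real.sqrt (u s * v s) * z s) =ᶠ[nhds t] fun _ => (0:ℝ) := by
    filter_upwards [Ioo_mem_nhds ht.1 ht.2] with s hs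
    rw [hu s ⟨hs.1.le, hs.2.le⟩]
    simp
  exact (hasDerivAt_const t (0:ℝ)).congr_of_eventuallyEq hev

end Spin7Aux

namespace Spin7Aux
lemma F_apply4 (k l : ℕ) (p : Fin 8 → ℝ) :
    Spin7.F k l p 4 = p 4 * (Spin7.G p + p 0 - p 1 - p 2) := rfl
lemma F_apply5 (k l : ℕ) (p : Fin 8 → ℝ) :
    Spin7.F k l p 5 = p 5 * (Spin7.G p + p 1 - p 2 - p 0) := rfl
lemma F_apply6 (k l : ℕ) (p : Fin 8 → ℝ) :
    Spin7.F k l p 6 = p 6 * (Spin7.G p + p 2 - p 0 - p 1) := rfl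
lemma F_apply7 (k l : ℕ) (p : Fin 8 → ℝ) :
    Spin7.F k l p 7 = p 7 * (-(Spin7.G p) + p 3) := rfl
end Spin7Aux

set_option maxHeartbeats 1000000 in
open Spin7 Spin7Aux Set in
/-- Lemma 4.2: the set 𝒟⁻ is invariant. -/
theorem Dminus_invariant
    (k l : ℕ) (hk : 0 < k) (hl : 0 < l) (hkl : Nat.Coprime k l)
    (a b : ℝ) (hab : a ≤ b) (x : ℝ → Fin 8 → ℝ)
    (hsol : IsSolutionOn k l x a b)
    (hspin : ∀ η ∈ Set.Icc a b, SpinMinus k l (x η))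
    (h1a : x a 5 ≤ x a 4) (h2a : x a 6 ≤ x a 4)
    (h3a : ((k : ℝ) * Real.sqrt (x a 4 * x a 5) + (l : ℝ) * Real.sqrt (x a 4 * x a 6)
        + ((k : ℝ) + l) * Real.sqrt (x a 5 * x a 6)) * x a 7 ≤ 2 * Δ k l) :
    ∀ η ∈ Set.Icc a b,
      x η 5 ≤ x η 4 ∧ x η 6 ≤ x η 4 ∧
      ((k : ℝ) * Real.sqrt (x η 4 * x η 5) + (l : ℝ) * Real.sqrt (x η 4 * x η 6)
        + ((k : ℝ) + l) * Real.sqrt (x η 5 * x η 6)) * x η 7 ≤ 2 * Δ k l := by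
  have hk1 : (1:ℝ) ≤ (k:ℝ) := by exact_mod_cast hk
  have hl1 : (1:ℝ) ≤ (l:ℝ) := by exact_mod_cast hl
  have hknn : (0:ℝ) ≤ (k:ℝ) := by linarith
  have hlnn : (0:ℝ) ≤ (l:ℝ) := by linarith
  have hΔ : 0 < Δ k l := by
    have : (0:ℝ) < (k:ℝ)^2 + (k:ℝ)*(l:ℝ) + (l:ℝ)^2 := by nlinarith
    simpa [Δ] using this
  have h2Δ : (0:ℝ) < 2*Δ k l := by linarith
  have hxc : ContinuousOn x (Icc a b) := fun η hη => (hsol η hη).continuousAt.continuousWithinAt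
  have hcont : ∀ i : Fin 8, ContinuousOn (fun s => x s i) (Icc a b) :=
    fun i => (continuous_apply i).comp_continuousOn hxc
  have hderiv : ∀ (i : Fin 8), ∀ η ∈ Icc a b, HasDerivAt (fun s => x s i) (F k l (x η) i) η :=
    fun i η hη => hasDerivAt_pi.1 (hsol η hη) i
  have hGc : ContinuousOn (fun s => G (x s)) (Icc a b) := by
    have hG : Continuous fun p : Fin 8 → ℝ => G p := by unfold G; continuity
    exact hG.comp_continuousOn hxc
  -- Part 1 : Z₁ - Z₂ ≥ 0 on [a,b]
  obtain ⟨K1, hK1⟩ := isCompact_Icc.exists_bound_of_continuousOn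
    (f := fun s => G (x s) - x s 2 - 2*(x s 4 + x s 5))
    ((hGc.sub (hcont 2)).sub (continuousOn_const.mul ((hcont 4).add (hcont 5))))
  have hw1 : ∀ η ∈ Icc a b, 0 ≤ x η 4 - x η 5 := by
    apply invariant_nonneg (d := fun η => F k l (x η) 4 - F k l (x η) 5) (K := K1)
    · exact (hcont 4).sub (hcont 5)
    · exact fun η hη =>
        (hderiv 4 η (Ioo_subset_Icc_self hη)).sub (hderiv 5 η (Ioo_subset_Icc_self hη))
    · intro η hη hwle
      obtain ⟨hz1, hz2, hz3, hz4, hc0, hc1, hc2, hc3, hsum⟩ := hspin η (Ioo_subset_Icc_self hη)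
      have hc1K : G (x η) - x η 2 - 2*(x η 4 + x η 5) ≤ K1 := by
        have := hK1 η (Ioo_subset_Icc_self hη)
        rw [Real.norm_eq_abs] at this
        exact (abs_le.mp this).2
      have e : F k l (x η) 4 - F k l (x η) 5
          = (x η 4 - x η 5) * (G (x η) - x η 2 - 2*(x η 4 + x η 5))
            + (x η 4 + x η 5) * ( ((k:ℝ) + l)/(2*Δ k l) * (x η 5) * (x η 6) * (x η 7)
                + (l:ℝ)/(2*Δ k l) * (x η 4) * (x η 6) * (x η 7) ) := by
        rw [F_apply4, F_apply5, hc0, hc1]; ring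
      rw [e]
      have ha1 : 0 ≤ ((k:ℝ) + l)/(2*Δ k l) * (x η 5) * (x η 6) * (x η 7) :=
        mul_nonneg (mul_nonneg (mul_nonneg (div_nonneg (by linarith) h2Δ.le) hz2) hz3) hz4
      have ha2 : 0 ≤ (l:ℝ)/(2*Δ k l) * (x η 4) * (x η 6) * (x η 7) :=
        mul_nonneg (mul_nonneg (mul_nonneg (div_nonneg hlnn h2Δ.le) hz1) hz3) hz4
      have hs12 : 0 ≤ x η 4 + x η 5 := by linarith
      linarith [mul_nonneg (sub_nonneg.2 hc1K) (neg_nonneg.2 hwle),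
        mul_nonneg hs12 (add_nonneg ha1 ha2)]
    · linarith [h1a]
  -- Part 2 : Z₁ - Z₃ ≥ 0 on [a,b]
  obtain ⟨K2, hK2⟩ := isCompact_Icc.exists_bound_of_continuousOn
    (f := fun s => G (x s) - x s 1 - 2*(x s 4 + x s 6))
    ((hGc.sub (hcont 1)).sub (continuousOn_const.mul ((hcont 4).add (hcont 6))))
  have hw2 : ∀ η ∈ Icc a b, 0 ≤ x η 4 - x η 6 := by
    apply invariant_nonneg (d := fun η => F k l (x η) 4 - F k l (x η) 6) (K := K2)
    · exact (hcont 4).sub (hcont 6)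
    · exact fun η hη =>
        (hderiv 4 η (Ioo_subset_Icc_self hη)).sub (hderiv 6 η (Ioo_subset_Icc_self hη))
    · intro η hη hwle
      obtain ⟨hz1, hz2, hz3, hz4, hc0, hc1, hc2, hc3, hsum⟩ := hspin η (Ioo_subset_Icc_self hη)
      have hc2K : G (x η) - x η 1 - 2*(x η 4 + x η 6) ≤ K2 := by
        have := hK2 η (Ioo_subset_Icc_self hη)
        rw [Real.norm_eq_abs] at this
        exact (abs_le.mp this).2
      have e : F k l (x η) 4 - F k l (x η) 6
          = (x η 4 - x η 6) * (G (x η) - x η 1 - 2*(x η 4 + x η 6))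
            + (x η 4 + x η 6) * ( ((k:ℝ) + l)/(2*Δ k l) * (x η 5) * (x η 6) * (x η 7)
                + (k:ℝ)/(2*Δ k l) * (x η 4) * (x η 5) * (x η 7) ) := by
        rw [F_apply4, F_apply6, hc0, hc2]; ring
      rw [e]
      have ha1 : 0 ≤ ((k:ℝ) + l)/(2*Δ k l) * (x η 5) * (x η 6) * (x η 7) :=
        mul_nonneg (mul_nonneg (mul_nonneg (div_nonneg (by linarith) h2Δ.le) hz2) hz3) hz4
      have ha3 : 0 ≤ (k:ℝ)/(2*Δ k l) * (x η 4) * (x η 5) * (x η 7) :=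
        mul_nonneg (mul_nonneg (mul_nonneg (div_nonneg hknn h2Δ.le) hz1) hz2) hz4
      have hs13 : 0 ≤ x η 4 + x η 6 := by linarith
      linarith [mul_nonneg (sub_nonneg.2 hc2K) (neg_nonneg.2 hwle),
        mul_nonneg hs13 (add_nonneg ha1 ha3)]
    · linarith [h2a]
  -- dichotomies for Z₁, Z₂, Z₃
  obtain ⟨B4, hB4⟩ := isCompact_Icc.exists_bound_of_continuousOn
    (f := fun s => G (x s) + x s 0 - x s 1 - x s 2)
    (((hGc.add (hcont 0)).sub (hcont 1)).sub (hcont 2))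
  have H4 := zero_or_pos (z := fun s => x s 4) (g := fun s => G (x s) + x s 0 - x s 1 - x s 2)
    (K := B4) (hcont 4)
    (fun η hη => by have h := hderiv 4 η (Ioo_subset_Icc_self hη); rwa [F_apply4] at h)
    (fun η hη => by rw [← Real.norm_eq_abs]; exact hB4 η (Ioo_subset_Icc_self hη))
    (fun η hη => (hspin η hη).1)
  obtain ⟨B5, hB5⟩ := isCompact_Icc.exists_bound_of_continuousOn
    (f := fun s => G (x s) + x s 1 - x s 2 - x s 0)
    (((hGc.add (hcont 1)).sub (hcont 2)).sub (hcont 0))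
  have H5 := zero_or_pos (z := fun s => x s 5) (g := fun s => G (x s) + x s 1 - x s 2 - x s 0)
    (K := B5) (hcont 5)
    (fun η hη => by have h := hderiv 5 η (Ioo_subset_Icc_self hη); rwa [F_apply5] at h)
    (fun η hη => by rw [← Real.norm_eq_abs]; exact hB5 η (Ioo_subset_Icc_self hη))
    (fun η hη => (hspin η hη).2.1)
  obtain ⟨B6, hB6⟩ := isCompact_Icc.exists_bound_of_continuousOn
    (f := fun s => G (x s) + x s 2 - x s 0 - x s 1)
    (((hGc.add (hcont 2)).sub (hcont 0)).sub (hcont 1))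
  have H6 := zero_or_pos (z := fun s => x s 6) (g := fun s => G (x s) + x s 2 - x s 0 - x s 1)
    (K := B6) (hcont 6)
    (fun η hη => by have h := hderiv 6 η (Ioo_subset_Icc_self hη); rwa [F_apply6] at h)
    (fun η hη => by rw [← Real.norm_eq_abs]; exact hB6 η (Ioo_subset_Icc_self hη))
    (fun η hη => (hspin η hη).2.2.1)
  have hD4 : ∀ t ∈ Ioo a b, HasDerivAt (fun s => x s 4)
      (x t 4 * (G (x t) + x t 0 - x t 1 - x t 2)) t := fun t ht => by
    have h := hderiv 4 t (Ioo_subset_Icc_self ht); rwa [F_apply4] at h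
  have hD5 : ∀ t ∈ Ioo a b, HasDerivAt (fun s => x s 5)
      (x t 5 * (G (x t) + x t 1 - x t 2 - x t 0)) t := fun t ht => by
    have h := hderiv 5 t (Ioo_subset_Icc_self ht); rwa [F_apply5] at h
  have hD6 : ∀ t ∈ Ioo a b, HasDerivAt (fun s => x s 6)
      (x t 6 * (G (x t) + x t 2 - x t 0 - x t 1)) t := fun t ht => by
    have h := hderiv 6 t (Ioo_subset_Icc_self ht); rwa [F_apply6] at h
  have hD7 : ∀ t ∈ Ioo a b, HasDerivAt (fun s => x s 7)
      (x t 7 * (-(G (x t)) + x t 3)) t := fun t ht => by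
    have h := hderiv 7 t (Ioo_subset_Icc_self ht); rwa [F_apply7] at h
  -- Part 3 : Q ≤ 2Δ on [a,b]
  have hQle : ∀ η ∈ Icc a b,
      ((k : ℝ) * Real.sqrt (x η 4 * x η 5) + (l : ℝ) * Real.sqrt (x η 4 * x η 6)
        + ((k : ℝ) + l) * Real.sqrt (x η 5 * x η 6)) * x η 7 ≤ 2 * Δ k l := by
    rcases H4 with h4pos | h4zero
    · -- Z₁ > 0 everywhere
      -- the three sqrt-terms have derivatives
      have h12 : ∀ t ∈ Ioo a b, HasDerivAt (fun s => Real.sqrt (x s 4 * x s 5) * x s 7)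
          (Real.sqrt (x t 4 * x t 5) * x t 7 * (x t 3 - x t 2)) t := by
        intro t ht
        rcases H5 with h5pos | h5zero
        · have h := sqrt_term_deriv_pos
            (hderiv 4 t (Ioo_subset_Icc_self ht)) (hderiv 5 t (Ioo_subset_Icc_self ht))
            (hderiv 7 t (Ioo_subset_Icc_self ht))
            (h4pos t (Ioo_subset_Icc_self ht)) (h5pos t (Ioo_subset_Icc_self ht))
          convert h using 1
          ring
        · have h := sqrt_term_deriv_zero_right (u := fun s => x s 4) (z := fun s => x s 7)
            ht h5zero
          convert h using 1
          have h0 : x t 5 = 0 := h5zero t (Ioo_subset_Icc_self ht)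
          rw [h0]
          simp
      have h13 : ∀ t ∈ Ioo a b, HasDerivAt (fun s => Real.sqrt (x s 4 * x s 6) * x s 7)
          (Real.sqrt (x t 4 * x t 6) * x t 7 * (x t 3 - x t 1)) t := by
        intro t ht
        rcases H6 with h6pos | h6zero
        · have h := sqrt_term_deriv_pos
            (hderiv 4 t (Ioo_subset_Icc_self ht)) (hderiv 6 t (Ioo_subset_Icc_self ht))
            (hderiv 7 t (Ioo_subset_Icc_self ht))
            (h4pos t (Ioo_subset_Icc_self ht)) (h6pos t (Ioo_subset_Icc_self ht))
          convert h using 1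
          ring
        · have h := sqrt_term_deriv_zero_right (u := fun s => x s 4) (z := fun s => x s 7)
            ht h6zero
          convert h using 1
          have h0 : x t 6 = 0 := h6zero t (Ioo_subset_Icc_self ht)
          rw [h0]
          simp
      have h23 : ∀ t ∈ Ioo a b, HasDerivAt (fun s => Real.sqrt (x s 5 * x s 6) * x s 7)
          (Real.sqrt (x t 5 * x t 6) * x t 7 * (x t 3 - x t 0)) t := by
        intro t ht
        rcases H5 with h5pos | h5zero
        · rcases H6 with h6pos | h6zero
          · have h := sqrt_term_deriv_pos
              (hderiv 5 t (Ioo_subset_Icc_self ht)) (hderiv 6 t (Ioo_subset_Icc_self ht))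
              (hderiv 7 t (Ioo_subset_Icc_self ht))
              (h5pos t (Ioo_subset_Icc_self ht)) (h6pos t (Ioo_subset_Icc_self ht))
            convert h using 1
            ring
          · have h := sqrt_term_deriv_zero_right (u := fun s => x s 5) (z := fun s => x s 7)
              ht h6zero
            convert h using 1
            have h0 : x t 6 = 0 := h6zero t (Ioo_subset_Icc_self ht)
            rw [h0]
            simp
        · have h := sqrt_term_deriv_zero_left (v := fun s => x s 6) (z := fun s => x s 7)
            ht h5zero
          convert h using 1
          have h0 : x t 5 = 0 := h5zero t (Ioo_subset_Icc_self ht)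
          rw [h0]
          simp
      -- derivative of Q
      have hQd : ∀ t ∈ Ioo a b, HasDerivAt
          (fun s => ((k : ℝ) * Real.sqrt (x s 4 * x s 5) + (l : ℝ) * Real.sqrt (x s 4 * x s 6)
            + ((k : ℝ) + l) * Real.sqrt (x s 5 * x s 6)) * x s 7)
          ((k:ℝ) * (Real.sqrt (x t 4 * x t 5) * x t 7 * (x t 3 - x t 2))
            + (l:ℝ) * (Real.sqrt (x t 4 * x t 6) * x t 7 * (x t 3 - x t 1))
            + ((k:ℝ)+l) * (Real.sqrt (x t 5 * x t 6) * x t 7 * (x t 3 - x t 0))) t := by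
        intro t ht
        have hQeq : (fun s => ((k : ℝ) * Real.sqrt (x s 4 * x s 5)
              + (l : ℝ) * Real.sqrt (x s 4 * x s 6)
              + ((k : ℝ) + l) * Real.sqrt (x s 5 * x s 6)) * x s 7)
            = fun s => (k:ℝ) * (Real.sqrt (x s 4 * x s 5) * x s 7)
              + ((l:ℝ) * (Real.sqrt (x s 4 * x s 6) * x s 7)
              + ((k:ℝ)+l) * (Real.sqrt (x s 5 * x s 6) * x s 7)) := by
          funext s; ring
        rw [hQeq]
        have h := ((h12 t ht).const_mul (k:ℝ)).add
          (((h13 t ht).const_mul (l:ℝ)).add ((h23 t ht).const_mul ((k:ℝ)+l)))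
        refine h.congr_deriv ?_
        ring
      -- a bound for the cushion coefficient
      have sq45 : ContinuousOn (fun s => Real.sqrt (x s 4 * x s 5)) (Icc a b) :=
        Real.continuous_sqrt.comp_continuousOn ((hcont 4).mul (hcont 5))
      have sq46 : ContinuousOn (fun s => Real.sqrt (x s 4 * x s 6)) (Icc a b) :=
        Real.continuous_sqrt.comp_continuousOn ((hcont 4).mul (hcont 6))
      have sq56 : ContinuousOn (fun s => Real.sqrt (x s 5 * x s 6)) (Icc a b) :=
        Real.continuous_sqrt.comp_continuousOn ((hcont 5).mul (hcont 6))
      obtain ⟨C3, hC3⟩ := isCompact_Icc.exists_bound_of_continuousOn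
        (f := fun t => (x t 7)^2 *
          ((k:ℝ) * Real.sqrt (x t 4 * x t 5) *
              ((l:ℝ)*(x t 4 * x t 6) + 2*(k:ℝ)*(x t 4 * x t 5) - ((k:ℝ)+l)*(x t 5 * x t 6))
           + (l:ℝ) * Real.sqrt (x t 4 * x t 6) *
              (2*(l:ℝ)*(x t 4 * x t 6) + (k:ℝ)*(x t 4 * x t 5) - ((k:ℝ)+l)*(x t 5 * x t 6))
           + ((k:ℝ)+l) * Real.sqrt (x t 5 * x t 6) *
              ((l:ℝ)*(x t 4 * x t 6) + (k:ℝ)*(x t 4 * x t 5) - 2*((k:ℝ)+l)*(x t 5 * x t 6))))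
        (((hcont 7).pow 2).mul
          ((((continuousOn_const.mul sq45).mul
              (((continuousOn_const.mul ((hcont 4).mul (hcont 6))).add
                (continuousOn_const.mul ((hcont 4).mul (hcont 5)))).sub
                (continuousOn_const.mul ((hcont 5).mul (hcont 6))))).add
            ((continuousOn_const.mul sq46).mul
              (((continuousOn_const.mul ((hcont 4).mul (hcont 6))).add
                (continuousOn_const.mul ((hcont 4).mul (hcont 5)))).sub
                (continuousOn_const.mul ((hcont 5).mul (hcont 6)))))).add
            ((continuousOn_const.mul sq56).mul
              (((continuousOn_const.mul ((hcont 4).mul (hcont 6))).add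
                (continuousOn_const.mul ((hcont 4).mul (hcont 5)))).sub
                (continuousOn_const.mul ((hcont 5).mul (hcont 6)))))))
      have h4Δ : (0:ℝ) < 4*(Δ k l)^2 := by nlinarith [mul_pos hΔ hΔ]
      have hw3 : ∀ η ∈ Icc a b, 0 ≤ 2*Δ k l -
          ((k : ℝ) * Real.sqrt (x η 4 * x η 5) + (l : ℝ) * Real.sqrt (x η 4 * x η 6)
            + ((k : ℝ) + l) * Real.sqrt (x η 5 * x η 6)) * x η 7 := by
        apply invariant_nonneg (K := C3/(4*(Δ k l)^2))
          (d := fun t => 0 - ((k:ℝ) * (Real.sqrt (x t 4 * x t 5) * x t 7 * (x t 3 - x t 2))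
            + (l:ℝ) * (Real.sqrt (x t 4 * x t 6) * x t 7 * (x t 3 - x t 1))
            + ((k:ℝ)+l) * (Real.sqrt (x t 5 * x t 6) * x t 7 * (x t 3 - x t 0))))
        · exact continuousOn_const.sub
            ((((continuousOn_const.mul sq45).add (continuousOn_const.mul sq46)).add
              (continuousOn_const.mul sq56)).mul (hcont 7))
        · exact fun t ht => (hasDerivAt_const t (2*Δ k l)).sub (hQd t ht)
        · intro η hη hwle
          have hIcc := Ioo_subset_Icc_self hη
          obtain ⟨hz1, hz2, hz3, hz4, e0, e1, e2, e3, hsum⟩ := hspin η hIcc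
          have hz12 : x η 5 ≤ x η 4 := by linarith [hw1 η hIcc]
          have hz13 : x η 6 ≤ x η 4 := by linarith [hw2 η hIcc]
          set p := Real.sqrt (x η 4) with hpdef
          set q := Real.sqrt (x η 5) with hqdef
          set r := Real.sqrt (x η 6) with hrdef
          have hp2 : p^2 = x η 4 := Real.sq_sqrt hz1
          have hq2 : q^2 = x η 5 := Real.sq_sqrt hz2
          have hr2 : r^2 = x η 6 := Real.sq_sqrt hz3
          have hqn : 0 ≤ q := Real.sqrt_nonneg _
          have hrn : 0 ≤ r := Real.sqrt_nonneg _
          have hpn : 0 ≤ p := Real.sqrt_nonneg _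
          have hqp : q ≤ p := Real.sqrt_le_sqrt hz12
          have hrp : r ≤ p := Real.sqrt_le_sqrt hz13
          have h45 : Real.sqrt (x η 4 * x η 5) = p * q := Real.sqrt_mul hz1 _
          have h46 : Real.sqrt (x η 4 * x η 6) = p * r := Real.sqrt_mul hz1 _
          have h56 : Real.sqrt (x η 5 * x η 6) = q * r := Real.sqrt_mul hz2 _
          set t := x η 7 with htdef
          -- abbreviations
          set S := (k:ℝ)*(p*q) + (l:ℝ)*(p*r) + ((k:ℝ)+l)*(q*r) with hSdef
          set P0 := -S*(p^2+q^2+r^2) + 2*p*q*r*((k:ℝ)*r + (l:ℝ)*q + ((k:ℝ)+l)*p) with hP0def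
          set Mv := (k:ℝ)*(p*q)*((l:ℝ)*(p^2*r^2) + 2*(k:ℝ)*(p^2*q^2) - ((k:ℝ)+l)*(q^2*r^2))
            + (l:ℝ)*(p*r)*(2*(l:ℝ)*(p^2*r^2) + (k:ℝ)*(p^2*q^2) - ((k:ℝ)+l)*(q^2*r^2))
            + ((k:ℝ)+l)*(q*r)*((l:ℝ)*(p^2*r^2) + (k:ℝ)*(p^2*q^2) - 2*((k:ℝ)+l)*(q^2*r^2))
            with hMvdef
          -- Q = S * t  and  2Δ ≤ S * t
          have eQ : ((k : ℝ) * Real.sqrt (x η 4 * x η 5) + (l : ℝ) * Real.sqrt (x η 4 * x η 6)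
              + ((k : ℝ) + l) * Real.sqrt (x η 5 * x η 6)) * x η 7 = S * t := by
            rw [h45, h46, h56, hSdef]
          have htS : 2*Δ k l ≤ S * t := by
            rw [eQ] at hwle; linarith
          have hSnn : 0 ≤ S := by
            rw [hSdef]
            linarith [mul_nonneg hknn (mul_nonneg hpn hqn),
              mul_nonneg hlnn (mul_nonneg hpn hrn),
              mul_nonneg (by linarith : (0:ℝ) ≤ (k:ℝ)+l) (mul_nonneg hqn hrn)]
          have htnn : 0 ≤ t := hz4
          have htpos : 0 < t := by
            rcases htnn.lt_or_eq with h | h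
            · exact h
            · exfalso; rw [← h] at htS; simp at htS; linarith
          have hSpos : 0 < S := by
            by_contra hS
            push_neg at hS
            have : S * t ≤ 0 := mul_nonpos_of_nonpos_of_nonneg hS htnn
            linarith
          -- bound from C3
          have hC3' : |t^2 * Mv| ≤ C3 := by
            have h := hC3 η hIcc
            rw [Real.norm_eq_abs, h45, h46, h56, ← hp2, ← hq2, ← hr2] at h
            rw [hMvdef]
            exact h
          -- the derivative identity
          have edQ : (k:ℝ) * (Real.sqrt (x η 4 * x η 5) * x η 7 * (x η 3 - x η 2))
              + (l:ℝ) * (Real.sqrt (x η 4 * x η 6) * x η 7 * (x η 3 - x η 1))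
              + ((k:ℝ)+l) * (Real.sqrt (x η 5 * x η 6) * x η 7 * (x η 3 - x η 0))
              = t * P0 + t^2 * Mv / (2*Δ k l) := by
            rw [h45, h46, h56, e0, e1, e2, e3, ← hp2, ← hq2, ← hr2, hP0def, hMvdef, hSdef]
            field_simp
            ring
          -- the key polynomial inequality
          have hkey : S*P0 + Mv ≤ 0 := by
            have hk2 := key_ineq (k:ℝ) (l:ℝ) p q r hknn hlnn hqn hrn hqp hrp
            calc S*P0 + Mv
                = ((k:ℝ)*p*q + (l:ℝ)*p*r + ((k:ℝ)+l)*q*r) *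
                    (-((k:ℝ)*p*q + (l:ℝ)*p*r + ((k:ℝ)+l)*q*r)*(p^2+q^2+r^2)
                      + 2*p*q*r*((k:ℝ)*r + (l:ℝ)*q + ((k:ℝ)+l)*p))
                  + ((k:ℝ)*(p*q)*((l:ℝ)*(p^2*r^2) + 2*(k:ℝ)*(p^2*q^2) - ((k:ℝ)+l)*(q^2*r^2))
                    + (l:ℝ)*(p*r)*(2*(l:ℝ)*(p^2*r^2) + (k:ℝ)*(p^2*q^2) - ((k:ℝ)+l)*(q^2*r^2))
                    + ((k:ℝ)+l)*(q*r)*((l:ℝ)*(p^2*r^2) + (k:ℝ)*(p^2*q^2)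
                        - 2*((k:ℝ)+l)*(q^2*r^2))) := by
                  rw [hSdef, hP0def, hMvdef]; ring
              _ ≤ 0 := hk2
          -- final estimate
          have hfin : t * P0 + t^2 * Mv / (2*Δ k l)
              ≤ C3/(4*(Δ k l)^2) * (S*t - 2*Δ k l) := by
            have hd1 : t * P0 + t^2 * Mv / (2*Δ k l)
                = (t/S)*(S*P0 + Mv) + (t*Mv/(2*Δ k l*S))*(t*S - 2*Δ k l) := by
              field_simp
              ring
            have hh2 : (t/S)*(S*P0 + Mv) ≤ 0 :=
              mul_nonpos_of_nonneg_of_nonpos (div_nonneg htnn hSnn) hkey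
            have hh3 : (t*Mv/(2*Δ k l*S))*(t*S - 2*Δ k l)
                ≤ C3/(4*(Δ k l)^2) * (t*S - 2*Δ k l) := by
              apply mul_le_mul_of_nonneg_right _ (by linarith [htS] : (0:ℝ) ≤ t*S - 2*Δ k l)
              rcases le_or_gt Mv 0 with hM | hM
              · have hle0 : t*Mv/(2*Δ k l*S) ≤ 0 :=
                  div_nonpos_of_nonpos_of_nonneg
                    (mul_nonpos_of_nonneg_of_nonpos htnn hM) (mul_pos h2Δ hSpos).le
                have h0K : 0 ≤ C3/(4*(Δ k l)^2) :=
                  div_nonneg (le_trans (abs_nonneg _) hC3') h4Δ.le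
                linarith
              · have e1' : t*Mv/(2*Δ k l*S) ≤ t^2*Mv/(4*(Δ k l)^2) := by
                  rw [div_le_div_iff₀ (mul_pos h2Δ hSpos) h4Δ]
                  linarith [mul_nonneg (mul_nonneg (mul_pos htpos hM).le h2Δ.le)
                    (by linarith [htS] : (0:ℝ) ≤ t*S - 2*Δ k l)]
                have e2' : t^2*Mv/(4*(Δ k l)^2) ≤ C3/(4*(Δ k l)^2) :=
                  (div_le_div_iff_of_pos_right h4Δ).2 (le_trans (le_abs_self _) hC3')
                linarith
            linarith
          rw [eQ, edQ]
          linarith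
        · linarith [h3a]
      intro η hη
      linarith [hw3 η hη]
    · -- Z₁ ≡ 0, hence Z₂ ≡ Z₃ ≡ 0
      intro η hη
      have hz40 : x η 4 = 0 := h4zero η hη
      have hz50 : x η 5 = 0 := by
        have h1 := hw1 η hη
        have h2 := (hspin η hη).2.1
        linarith
      have hz60 : x η 6 = 0 := by
        have h1 := hw2 η hη
        have h2 := (hspin η hη).2.2.1
        linarith
      rw [hz40, hz50, hz60]
      simp
      linarith
  intro η hη
  exact ⟨by linarith [hw1 η hη], by linarith [hw2 η hη], hQle η hη⟩
end
end

section
/- Let k, l be positive integers and Δ = k² + k·l + l². Let Z₁, Z₂, Z₃, Z₄ be nonnegative real numbers with Z₁ ≤ Z₂, Z₁ ≤ Z₃, satisfying (k·√(Z₁Z₂) + l·√(Z₁Z₃) + (k+l)·√(Z₂Z₃))·Z₄ ≤ 2Δ and the conservation relation 2(Z₁ + Z₂ + Z₃) = 1 + (1/(2Δ))·(l·(Z₂ − Z₁)·Z₃ + k·(Z₃ − Z₁)·Z₂)·Z₄. Then 2Z₁ + (1/2)·(√Z₂ − √Z₃)² + (3/2)·(Z₂ + Z₃) ≤ 1; in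 particular Z₁, Z₂, Z₃ are each bounded by 1. (Proposition 4.3, case of 𝒟⁺.) -/
noncomputable section

/-- Proposition 4.3, case of 𝒟⁺: boundedness of Z₁, Z₂, Z₃. -/
theorem Z_bounded_Dplus
    (k l : ℕ) (hk : 0 < k) (hl : 0 < l)
    (Z₁ Z₂ Z₃ Z₄ : ℝ)
    (hZ₁ : 0 ≤ Z₁) (hZ₂ : 0 ≤ Z₂) (hZ₃ : 0 ≤ Z₃) (hZ₄ : 0 ≤ Z₄)
    (h12 : Z₁ ≤ Z₂) (h13 : Z₁ ≤ Z₃)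
    (hD : ((k : ℝ) * Real.sqrt (Z₁*Z₂) + (l : ℝ) * Real.sqrt (Z₁*Z₃)
        + ((k : ℝ) + l) * Real.sqrt (Z₂*Z₃)) * Z₄
      ≤ 2 * ((k : ℝ)^2 + (k : ℝ)*(l : ℝ) + (l : ℝ)^2))
    (hcons : 2*(Z₁ + Z₂ + Z₃)
      = 1 + (1/(2*((k : ℝ)^2 + (k : ℝ)*(l : ℝ) + (l : ℝ)^2)))
          * ((l : ℝ)*(Z₂ - Z₁)*Z₃ + (k : ℝ)*(Z₃ - Z₁)*Z₂) * Z₄) :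
    2*Z₁ + (1/2)*(Real.sqrt Z₂ - Real.sqrt Z₃)^2 + (3/2)*(Z₂ + Z₃) ≤ 1
      ∧ Z₁ ≤ 1 ∧ Z₂ ≤ 1 ∧ Z₃ ≤ 1 := by
  have hkR : (0:ℝ) < k := by exact_mod_cast hk
  have hlR : (0:ℝ) < l := by exact_mod_cast hl
  have hΔ : (0:ℝ) < (k : ℝ)^2 + (k : ℝ)*(l : ℝ) + (l : ℝ)^2 := by positivity
  set Δ : ℝ := (k : ℝ)^2 + (k : ℝ)*(l : ℝ) + (l : ℝ)^2 with hΔdef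
  set s1 := Real.sqrt Z₁ with hs1d
  set s2 := Real.sqrt Z₂ with hs2d
  set s3 := Real.sqrt Z₃ with hs3d
  have hs1 : s1^2 = Z₁ := Real.sq_sqrt hZ₁
  have hs2 : s2^2 = Z₂ := Real.sq_sqrt hZ₂
  have hs3 : s3^2 = Z₃ := Real.sq_sqrt hZ₃
  have hs1n : 0 ≤ s1 := Real.sqrt_nonneg _
  have hs2n : 0 ≤ s2 := Real.sqrt_nonneg _
  have hs3n : 0 ≤ s3 := Real.sqrt_nonneg _
  have e12 : Real.sqrt (Z₁*Z₂) = s1*s2 := Real.sqrt_mul hZ₁ _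
  have e13 : Real.sqrt (Z₁*Z₃) = s1*s3 := Real.sqrt_mul hZ₁ _
  have e23 : Real.sqrt (Z₂*Z₃) = s2*s3 := Real.sqrt_mul hZ₂ _
  rw [e12, e13, e23] at hD
  -- key bound: E * Z₄ ≤ 2Δ * (s2*s3)
  have hE1 : (l : ℝ)*(Z₂ - Z₁)*Z₃ + (k : ℝ)*(Z₃ - Z₁)*Z₂
      ≤ ((k : ℝ)*(s1*s2) + (l : ℝ)*(s1*s3) + ((k : ℝ)+l)*(s2*s3)) * (s2*s3) := by
    rw [← hs1, ← hs2, ← hs3]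
    nlinarith [mul_nonneg hkR.le (mul_nonneg (mul_nonneg hs1n hs3n) (sq_nonneg s2)),
      mul_nonneg hlR.le (mul_nonneg (mul_nonneg hs1n hs2n) (sq_nonneg s3)),
      mul_nonneg hlR.le (mul_nonneg (sq_nonneg s1) (sq_nonneg s3)),
      mul_nonneg hkR.le (mul_nonneg (sq_nonneg s1) (sq_nonneg s2))]
  have key : ((l : ℝ)*(Z₂ - Z₁)*Z₃ + (k : ℝ)*(Z₃ - Z₁)*Z₂) * Z₄ ≤ 2*Δ*(s2*s3) := by
    have h1 := mul_le_mul_of_nonneg_right hE1 hZ₄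
    have h2 : (((k : ℝ)*(s1*s2) + (l : ℝ)*(s1*s3) + ((k : ℝ)+l)*(s2*s3)) * Z₄) * (s2*s3)
        ≤ 2*Δ*(s2*s3) :=
      mul_le_mul_of_nonneg_right hD (mul_nonneg hs2n hs3n)
    calc ((l : ℝ)*(Z₂ - Z₁)*Z₃ + (k : ℝ)*(Z₃ - Z₁)*Z₂) * Z₄
        ≤ (((k : ℝ)*(s1*s2) + (l : ℝ)*(s1*s3) + ((k : ℝ)+l)*(s2*s3)) * (s2*s3)) * Z₄ := h1
      _ = (((k : ℝ)*(s1*s2) + (l : ℝ)*(s1*s3) + ((k : ℝ)+l)*(s2*s3)) * Z₄) * (s2*s3) := by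
          ring
      _ ≤ 2*Δ*(s2*s3) := h2
  have hdiv : 1/(2*Δ) * ((l : ℝ)*(Z₂ - Z₁)*Z₃ + (k : ℝ)*(Z₃ - Z₁)*Z₂) * Z₄ ≤ s2*s3 := by
    rw [show 1/(2*Δ) * ((l : ℝ)*(Z₂ - Z₁)*Z₃ + (k : ℝ)*(Z₃ - Z₁)*Z₂) * Z₄
        = (((l : ℝ)*(Z₂ - Z₁)*Z₃ + (k : ℝ)*(Z₃ - Z₁)*Z₂) * Z₄) / (2*Δ) from by ring]
    rw [div_le_iff₀ (by positivity)]
    linarith [key]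
  have hsq : (s2 - s3)^2 = Z₂ + Z₃ - 2*(s2*s3) := by rw [← hs2, ← hs3]; ring
  have main : 2*Z₁ + (1/2)*(s2 - s3)^2 + (3/2)*(Z₂ + Z₃) ≤ 1 := by
    rw [hsq]; linarith [hcons, hdiv]
  refine ⟨main, ?_, ?_, ?_⟩ <;>
    linarith [main, sq_nonneg (s2 - s3), hZ₁, hZ₂, hZ₃]
end
end

section
/- Let k, l be positive integers and Δ = k² + k·l + l². Let Z₁, Z₂, Z₃, Z₄ be nonnegative real numbers with Z₁ ≥ Z₂, Z₁ ≥ Z₃, satisfying (k·√(Z₁Z₂) + l·√(Z₁Z₃) + (k+l)·√(Z₂Z₃))·Z₄ ≤ 2Δ and the conservation relation 2(Z₁ + Z₂ + Z₃) = 1 + (1/(2Δ))·(l·(Z₁ − Z₂)·Z₃ + k·(Z₁ − Z₃)·Z₂)·Z₄. Then Z₁ + 2Z₂ + 2Z₃ ≤ 1. (Proposition 4.3, case of 𝒟⁻.) -/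
noncomputable section

/-- Proposition 4.3, case of 𝒟⁻: boundedness of Z₁, Z₂, Z₃. -/
theorem Z_bounded_Dminus
    (k l : ℕ) (hk : 0 < k) (hl : 0 < l)
    (Z₁ Z₂ Z₃ Z₄ : ℝ)
    (hZ₁ : 0 ≤ Z₁) (hZ₂ : 0 ≤ Z₂) (hZ₃ : 0 ≤ Z₃) (hZ₄ : 0 ≤ Z₄)
    (h12 : Z₂ ≤ Z₁) (h13 : Z₃ ≤ Z₁)
    (hD : ((k : ℝ) * Real.sqrt (Z₁*Z₂) + (l : ℝ) * Real.sqrt (Z₁*Z₃)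
        + ((k : ℝ) + l) * Real.sqrt (Z₂*Z₃)) * Z₄
      ≤ 2 * ((k : ℝ)^2 + (k : ℝ)*(l : ℝ) + (l : ℝ)^2))
    (hcons : 2*(Z₁ + Z₂ + Z₃)
      = 1 + (1/(2*((k : ℝ)^2 + (k : ℝ)*(l : ℝ) + (l : ℝ)^2)))
          * ((l : ℝ)*(Z₁ - Z₂)*Z₃ + (k : ℝ)*(Z₁ - Z₃)*Z₂) * Z₄) :
    Z₁ + 2*Z₂ + 2*Z₃ ≤ 1 := by
  have hK : (0:ℝ) < k := by exact_mod_cast hk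
  have hL : (0:ℝ) < l := by exact_mod_cast hl
  have hΔ : (0:ℝ) < (k : ℝ)^2 + (k : ℝ)*(l : ℝ) + (l : ℝ)^2 := by positivity
  have hs12 : 0 ≤ Real.sqrt (Z₁*Z₂) := Real.sqrt_nonneg _
  have hs13 : 0 ≤ Real.sqrt (Z₁*Z₃) := Real.sqrt_nonneg _
  have hs23 : 0 ≤ Real.sqrt (Z₂*Z₃) := Real.sqrt_nonneg _
  have hq12 : Real.sqrt (Z₁*Z₂) ^ 2 = Z₁*Z₂ := Real.sq_sqrt (by positivity)
  have hq13 : Real.sqrt (Z₁*Z₃) ^ 2 = Z₁*Z₃ := Real.sq_sqrt (by positivity)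
  have h1 : Real.sqrt (Z₁*Z₂) ≤ Z₁ := by
    calc Real.sqrt (Z₁*Z₂) ≤ Real.sqrt (Z₁*Z₁) :=
          Real.sqrt_le_sqrt (by nlinarith)
      _ = Z₁ := by rw [← sq]; exact Real.sqrt_sq hZ₁
  have h2 : Real.sqrt (Z₁*Z₃) ≤ Z₁ := by
    calc Real.sqrt (Z₁*Z₃) ≤ Real.sqrt (Z₁*Z₁) :=
          Real.sqrt_le_sqrt (by nlinarith)
      _ = Z₁ := by rw [← sq]; exact Real.sqrt_sq hZ₁
  have key : (l : ℝ)*(Z₁ - Z₂)*Z₃ + (k : ℝ)*(Z₁ - Z₃)*Z₂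
      ≤ Z₁ * ((k : ℝ) * Real.sqrt (Z₁*Z₂) + (l : ℝ) * Real.sqrt (Z₁*Z₃)
        + ((k : ℝ) + l) * Real.sqrt (Z₂*Z₃)) := by
    nlinarith [hq12, hq13,
      mul_nonneg (mul_nonneg hK.le hZ₂) hZ₃,
      mul_nonneg (mul_nonneg hL.le hZ₂) hZ₃,
      mul_nonneg (mul_nonneg (add_pos hK hL).le hs23) hZ₁,
      mul_le_mul_of_nonneg_right h1 hs12,
      mul_le_mul_of_nonneg_right h2 hs13]
  have key2 : ((l : ℝ)*(Z₁ - Z₂)*Z₃ + (k : ℝ)*(Z₁ - Z₃)*Z₂) * Z₄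
      ≤ Z₁ * (2 * ((k : ℝ)^2 + (k : ℝ)*(l : ℝ) + (l : ℝ)^2)) := by
    calc ((l : ℝ)*(Z₁ - Z₂)*Z₃ + (k : ℝ)*(Z₁ - Z₃)*Z₂) * Z₄
        ≤ (Z₁ * ((k : ℝ) * Real.sqrt (Z₁*Z₂) + (l : ℝ) * Real.sqrt (Z₁*Z₃)
          + ((k : ℝ) + l) * Real.sqrt (Z₂*Z₃))) * Z₄ :=
          mul_le_mul_of_nonneg_right key hZ₄
      _ = Z₁ * (((k : ℝ) * Real.sqrt (Z₁*Z₂) + (l : ℝ) * Real.sqrt (Z₁*Z₃)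
          + ((k : ℝ) + l) * Real.sqrt (Z₂*Z₃)) * Z₄) := by ring
      _ ≤ Z₁ * (2 * ((k : ℝ)^2 + (k : ℝ)*(l : ℝ) + (l : ℝ)^2)) :=
          mul_le_mul_of_nonneg_left hD hZ₁
  have hfin : (1/(2*((k : ℝ)^2 + (k : ℝ)*(l : ℝ) + (l : ℝ)^2)))
      * ((l : ℝ)*(Z₁ - Z₂)*Z₃ + (k : ℝ)*(Z₁ - Z₃)*Z₂) * Z₄ ≤ Z₁ := by
    rw [mul_assoc, one_div, inv_mul_le_iff₀ (by positivity)]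
    linarith [key2]
  linarith [hcons, hfin]
end
end

section
/- Let x : ℝ → ℝ⁸ be a solution of the system on [a,b] such that for every η ∈ [a,b] one has Z₁(η) > 0, Z₂(η) > 0, Z₃(η) > 0, Z₄(η) > 0 and 2X₁(η) + 2X₂(η) + 2X₃(η) + X₄(η) = 1. Then the function η ↦ Z₄(η)/(Z₁(η)²·Z₂(η)²·Z₃(η)²) is non-increasing on [a,b]: for all η₁ ≤ η₂ in [a,b], Z₄(η₂)/(Z₁(η₂)²Z₂(η₂)²Z₃(η₂)²) ≤ Z₄(η₁)/(Z₁(η₁)²Z₂(η₁)²Z₃(η₁)²). (From the identity (Z₄/(Z₁²Z₂²Z₃²))′ = (Z₄/(Z₁²Z₂²Z₃²))(1 − 7G) and G ≥ 1/7 under the trace constraint, used in Proposition 4.4.) -/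
noncomputable section

open Spin7 in
/-- The quantity Z₄/(Z₁²Z₂²Z₃²) is non-increasing along solutions satisfying the trace
constraint with positive Z's (equation (4.13)). -/
theorem Z4_over_Z123_sq_antitone
    (k l : ℕ) (hk : 0 < k) (hl : 0 < l) (hkl : Nat.Coprime k l)
    (a b : ℝ) (x : ℝ → Fin 8 → ℝ)
    (hsol : IsSolutionOn k l x a b)
    (hpos : ∀ η ∈ Set.Icc a b, 0 < x η 4 ∧ 0 < x η 5 ∧ 0 < x η 6 ∧ 0 < x η 7)
    (htrace : ∀ η ∈ Set.Icc a b, 2 * x η 0 + 2 * x η 1 + 2 * x η 2 + x η 3 = 1) :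
    ∀ η₁ ∈ Set.Icc a b, ∀ η₂ ∈ Set.Icc a b, η₁ ≤ η₂ →
      x η₂ 7 / ((x η₂ 4)^2 * (x η₂ 5)^2 * (x η₂ 6)^2)
        ≤ x η₁ 7 / ((x η₁ 4)^2 * (x η₁ 5)^2 * (x η₁ 6)^2) := by
  set f : ℝ → ℝ := fun η => x η 7 / ((x η 4)^2 * (x η 5)^2 * (x η 6)^2) with hfdef
  have key : ∀ η ∈ Set.Icc a b, HasDerivAt f (f η * (1 - 7 * G (x η))) η := by
    intro η hη
    obtain ⟨h4, h5, h6, h7⟩ := hpos η hη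
    have hc : ∀ i, HasDerivAt (fun t => x t i) (F k l (x η) i) η :=
      fun i => hasDerivAt_pi.mp (hsol η hη) i
    have d4 : HasDerivAt (fun t => x t 4)
        (x η 4 * (G (x η) + x η 0 - x η 1 - x η 2)) η := hc 4
    have d5 : HasDerivAt (fun t => x t 5)
        (x η 5 * (G (x η) + x η 1 - x η 2 - x η 0)) η := hc 5
    have d6 : HasDerivAt (fun t => x t 6)
        (x η 6 * (G (x η) + x η 2 - x η 0 - x η 1)) η := hc 6
    have d7 : HasDerivAt (fun t => x t 7)
        (x η 7 * (-(G (x η)) + x η 3)) η := hc 7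
    have hD : HasDerivAt (fun t => (x t 4)^2 * (x t 5)^2 * (x t 6)^2)
        ((((2 : ℕ) * x η 4 ^ 1 * (x η 4 * (G (x η) + x η 0 - x η 1 - x η 2))) * (x η 5)^2
          + (x η 4)^2 * ((2 : ℕ) * x η 5 ^ 1 * (x η 5 * (G (x η) + x η 1 - x η 2 - x η 0))))
            * (x η 6)^2
          + (x η 4)^2 * (x η 5)^2
            * ((2 : ℕ) * x η 6 ^ 1 * (x η 6 * (G (x η) + x η 2 - x η 0 - x η 1)))) η :=
      ((d4.pow 2).mul (d5.pow 2)).mul (d6.pow 2)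
    have hDne : (x η 4)^2 * (x η 5)^2 * (x η 6)^2 ≠ 0 := by positivity
    have hdiv := d7.div hD hDne
    have ht := htrace η hη
    refine HasDerivAt.congr_deriv hdiv ?_
    simp only [hfdef]
    field_simp
    linear_combination ht
  have cont : ContinuousOn f (Set.Icc a b) :=
    fun η hη => ((key η hη).continuousAt).continuousWithinAt
  have anti : AntitoneOn f (Set.Icc a b) := by
    apply antitoneOn_of_hasDerivWithinAt_nonpos (convex_Icc a b) cont
      (f' := fun η => f η * (1 - 7 * G (x η)))
    · intro η hη
      rw [interior_Icc] at hη
      exact ((key η (Set.Ioo_subset_Icc_self hη)).hasDerivWithinAt)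
    · intro η hη
      rw [interior_Icc] at hη
      have hη' := Set.Ioo_subset_Icc_self hη
      obtain ⟨h4, h5, h6, h7⟩ := hpos η hη'
      have ht := htrace η hη'
      have hfpos : 0 < f η := by
        simp only [hfdef]; positivity
      have hS : (2 * x η 0 + 2 * x η 1 + 2 * x η 2 + x η 3) ^ 2 = 1 := by
        rw [ht]; norm_num
      have hG : (1 : ℝ) ≤ 7 * G (x η) := by
        simp only [G]
        nlinarith [hS, sq_nonneg (x η 0 - x η 1), sq_nonneg (x η 0 - x η 2),
          sq_nonneg (x η 1 - x η 2), sq_nonneg (x η 0 - x η 3),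
          sq_nonneg (x η 1 - x η 3), sq_nonneg (x η 2 - x η 3)]
      nlinarith
  intro η₁ h₁ η₂ h₂ hle
  exact anti h₁ h₂ hle
end
end

section
/- For all real Z₁ ≥ 0, Z₂ ≥ 0, Z₃ ≥ 0 and all real k ≥ 0, l ≥ 0, one has ((k+l)²·Z₂²Z₃² + l²·Z₁²Z₃² + k²·Z₁²Z₂²)·(Z₁ + Z₂ + Z₃)² + (Z₁² + Z₂² + Z₃² − 6Z₁Z₂ − 6Z₂Z₃ − 6Z₁Z₃)·((k+l)·Z₂Z₃ − l·Z₁Z₃ − k·Z₁Z₂)² ≥ 0. (The key inequality of Lemma 5.1, expressing the non-negativity of the derivative of X₄ − X₁ − X₂ − X₃ on the boundary of ℬ^±.) -/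
theorem F_aux (x y z : ℝ) (hx : 0 ≤ x) (hz : 0 ≤ z) :
    0 ≤ (x+y+z)^2*(z^2+x^2) + ((x+y+z)^2-8*(x*y+y*z+x*z))*(z-x)^2 := by
  rcases eq_or_lt_of_le (by nlinarith [sq_nonneg (x-z), mul_nonneg hx hz] : (0:ℝ) ≤ x^2+z^2-x*z) with h | h
  · have hx0 : x = 0 := by nlinarith [sq_nonneg (x-z), sq_nonneg (x+z), mul_nonneg hx hz, sq_nonneg x, sq_nonneg z]
    have hz0 : z = 0 := by nlinarith [sq_nonneg (x-z), mul_nonneg hx hz, sq_nonneg x, sq_nonneg z]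
    simp [hx0, hz0]
  · nlinarith [sq_nonneg ((x^2+z^2-x*z)*y - (x+z)*(x^2+z^2-3*x*z)), sq_nonneg (x*z*(z-x)), h, mul_pos h h]

theorem quad_nonneg (A B C a b : ℝ) (hA : 0 ≤ A) (hC : 0 ≤ C) (h : B^2 ≤ 4*(A*C)) :
    0 ≤ A*a^2 + B*(a*b) + C*b^2 := by
  rcases eq_or_lt_of_le hA with hA0 | hApos
  · have hB : B = 0 := by nlinarith [sq_nonneg B]
    rw [← hA0, hB]
    have := mul_nonneg hC (sq_nonneg b)
    simpa using this
  · nlinarith [sq_nonneg (2*A*a + B*b), mul_nonneg (by nlinarith : (0:ℝ) ≤ 4*(A*C) - B^2) (sq_nonneg b), mul_pos hApos hApos]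

theorem det_aux (x y z : ℝ) :
    (2*(x+y+z)^2*(y*z) + 2*((x+y+z)^2-8*(x*y+y*z+x*z))*((z-x)*(y-x)))^2
      ≤ 4*(((x+y+z)^2*(z^2+x^2) + ((x+y+z)^2-8*(x*y+y*z+x*z))*(z-x)^2)
          * ((x+y+z)^2*(y^2+x^2) + ((x+y+z)^2-8*(x*y+y*z+x*z))*(y-x)^2)) := by
  nlinarith [sq_nonneg (x*(x+y+z)*((y-z)^2+x^2-2*x*y-2*x*z))]

/-- The key inequality of Lemma 5.1: non-negativity of the derivative of
X₄ − X₁ − X₂ − X₃ on the boundary of ℬ^±. -/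
theorem key_inequality_B (Z₁ Z₂ Z₃ k l : ℝ)
    (hZ₁ : 0 ≤ Z₁) (hZ₂ : 0 ≤ Z₂) (hZ₃ : 0 ≤ Z₃) (hk : 0 ≤ k) (hl : 0 ≤ l) :
    0 ≤ ((k+l)^2*Z₂^2*Z₃^2 + l^2*Z₁^2*Z₃^2 + k^2*Z₁^2*Z₂^2) * (Z₁ + Z₂ + Z₃)^2
      + (Z₁^2 + Z₂^2 + Z₃^2 - 6*Z₁*Z₂ - 6*Z₂*Z₃ - 6*Z₁*Z₃)
        * ((k+l)*Z₂*Z₃ - l*Z₁*Z₃ - k*Z₁*Z₂)^2 := by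
  set x := Z₁; set y := Z₂; set z := Z₃
  have hA := F_aux x y z hZ₁ hZ₃
  have hC : 0 ≤ (x+y+z)^2*(y^2+x^2) + ((x+y+z)^2-8*(x*y+y*z+x*z))*(y-x)^2 := by
    nlinarith [F_aux x z y hZ₁ hZ₂]
  have hdet := det_aux x y z
  have hq := quad_nonneg _ _ _ (k*y) (l*z) hA hC hdet
  nlinarith [hq]
end

section
/- Let ε ∈ {1, −1}. Let x : ℝ → ℝ⁸ be a solution of the system on [a,b] such that for every η ∈ [a,b] the point x(η) satisfies: Z₁, Z₂, Z₃, Z₄ ≥ 0, X₁ = Z₂+Z₃−Z₁ − ε·((k+l)/(2Δ))Z₂Z₃Z₄, X₂ = Z₃+Z₁−Z₂ + ε·(l/(2Δ))Z₁Z₃Z₄, X₃ = Z₁+Z₂−Z₃ + ε·(k/(2Δ))Z₁Z₂Z₄, X₄ = ε·(((k+l)Z₂Z₃ − lZ₁Z₃ − kZ₁Z₂)/(2Δ))·Z₄, and 2(Z₁+Z₂+Z₃) − X₄ = 1. If X₄(a) − X₁(a) − X₂(a) − X₃(a) ≥ 0, then X₄(η) − X₁(η) − X₂(η) − X₃(η)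 ≥ 0 for every η ∈ [a,b]. (Lemma 5.1: the sets ℬ^± are invariant.) -/
noncomputable section

set_option maxHeartbeats 1000000

section BInvariantAux

private lemma fnn (q S : ℝ) (h3q : S^2 ≤ 3*q) :
    0 ≤ 4*q*(2*S-1)^2 + (3*q - S^2)*(4*q - 3*S^2 - 4*S + 8/3) := by
  rcases le_or_gt (5*S^2 + 20*S - 12) 0 with h | h
  · have hu : 0 ≤ q - S^2/3 := by linarith
    have ht1 : 0 ≤ (q - S^2/3) * (12 - 20*S - 5*S^2) :=
      mul_nonneg hu (by linarith)
    have ht2 : 0 ≤ (q - S^2/3) * (3*S-2)^2 := mul_nonneg hu (sq_nonneg _)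
    nlinarith [sq_nonneg (q - S^2/3), mul_nonneg (sq_nonneg S) (sq_nonneg (2*S-1))]
  · nlinarith [sq_nonneg (24*q + 3*S^2 - 28*S + 12),
      mul_nonneg (sq_nonneg (3*S-2)) h.le]

private lemma csq (k l z1 z2 z3 : ℝ) :
    let q := z1^2+z2^2+z3^2; let S := z1+z2+z3
    let A := (k+l)*z2*z3; let B := l*z1*z3; let C := k*z1*z2
    q*(q*(A-B-C)^2) ≤ q*((3*q - S^2)*(A^2+B^2+C^2)) := by
  intro q S A B C
  have hid : q*((3*q - S^2)*(A^2+B^2+C^2)) - q*(q*(A-B-C)^2) =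
      ((q - S*z1)*B + (q - S*z2)*A)^2 + ((q - S*z1)*C + (q - S*z3)*A)^2
      + ((q - S*z2)*C - (q - S*z3)*B)^2 := by
    simp only [q, S, A, B, C]; ring
  nlinarith [sq_nonneg ((q - S*z1)*B + (q - S*z2)*A),
    sq_nonneg ((q - S*z1)*C + (q - S*z3)*A), sq_nonneg ((q - S*z2)*C - (q - S*z3)*B)]


private lemma Pnn (k l z1 z2 z3 : ℝ) (h1 : 0 ≤ z1) (h2 : 0 ≤ z2) (h3 : 0 ≤ z3) :
    0 ≤ 4*(((k+l)*z2*z3)^2 + (l*z1*z3)^2 + (k*z1*z2)^2)*(2*(z1+z2+z3)-1)^2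
      + ((k+l)*z2*z3 - (l*z1*z3) - (k*z1*z2))^2
        * (4*(z1^2+z2^2+z3^2) - 3*(z1+z2+z3)^2 - 4*(z1+z2+z3) + 8/3) := by
  have hcs := csq k l z1 z2 z3
  simp only at hcs
  set q := z1^2+z2^2+z3^2 with hq
  set S := z1+z2+z3 with hS
  set A := (k+l)*z2*z3 with hA
  set B := l*z1*z3 with hB
  set C := k*z1*z2 with hC
  set M := A^2+B^2+C^2 with hM
  set m := A - B - C with hm
  have hMnn : 0 ≤ M := by rw [hM]; positivity
  have h3q : S^2 ≤ 3*q := by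
    rw [hq, hS]
    nlinarith [sq_nonneg (z1-z2), sq_nonneg (z1-z3), sq_nonneg (z2-z3)]
  have hqnn : 0 ≤ q := by rw [hq]; positivity
  clear_value A B C
  rw [hm] at hcs ⊢
  clear_value q S M
  rcases eq_or_lt_of_le hqnn with hq0 | hqpos
  · have h0 : z1^2+z2^2+z3^2 = 0 := by rw [← hq, ← hq0]
    have hz1 : z1 = 0 := by
      have : z1^2 = 0 := by nlinarith [sq_nonneg z1, sq_nonneg z2, sq_nonneg z3]
      exact pow_eq_zero_iff (by norm_num) |>.mp this
    have hz2 : z2 = 0 := by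
      have : z2^2 = 0 := by nlinarith [sq_nonneg z1, sq_nonneg z2, sq_nonneg z3]
      exact pow_eq_zero_iff (by norm_num) |>.mp this
    have hMz : M = 0 := by rw [hM, hA, hB, hC, hz1, hz2]; ring
    have hmz : A - B - C = 0 := by rw [hA, hB, hC, hz1, hz2]; ring
    rw [hMz, hmz]; norm_num
  · rcases le_or_gt (4*q - 3*S^2 - 4*S + 8/3) 0 with hTneg | hTpos
    · have hcs2 : q*(A-B-C)^2 ≤ (3*q - S^2)*M := by
        have h3 : q*(q*(A-B-C)^2) ≤ q*((3*q-S^2)*M) := hcs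
        exact le_of_mul_le_mul_left h3 hqpos
      have hf := fnn q S h3q
      have key : 0 ≤ q * (4*M*(2*S-1)^2 + (A-B-C)^2*(4*q - 3*S^2 - 4*S + 8/3)) := by
        have e2 : ((3*q - S^2)*M)*(4*q - 3*S^2 - 4*S + 8/3)
            ≤ (q*(A-B-C)^2)*(4*q - 3*S^2 - 4*S + 8/3) :=
          mul_le_mul_of_nonpos_right hcs2 hTneg
        have e3 : 0 ≤ M * (4*q*(2*S-1)^2 + (3*q - S^2)*(4*q - 3*S^2 - 4*S + 8/3)) :=
          mul_nonneg hMnn hf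
        nlinarith
      nlinarith
    · nlinarith [mul_nonneg hMnn (sq_nonneg (2*S-1)), mul_nonneg (sq_nonneg (A-B-C)) hTpos.le]

private lemma keyalg (k l e z1 z2 z3 z4 : ℝ) (hD : 0 < k^2+k*l+l^2) (he : e^2 = 1)
    (h1 : 0 ≤ z1) (h2 : 0 ≤ z2) (h3 : 0 ≤ z3)
    (hc : e * (((k+l)*z2*z3 - l*z1*z3 - k*z1*z2)/(2*(k^2+k*l+l^2))) * z4
        = 2*(z1+z2+z3) - 1) :
    4/3*(3*(z1+z2+z3)-2) ≤
      (((k+l)*z2*z3)^2 + (l*z1*z3)^2 + (k*z1*z2)^2)*z4^2/(k^2+k*l+l^2)^2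
      + (z1^2+z2^2+z3^2) - 6*(z1*z2+z1*z3+z2*z3) := by
  have hD0 : (k^2+k*l+l^2) ≠ 0 := ne_of_gt hD
  have hP := Pnn k l z1 z2 z3 h1 h2 h3
  have hsq : ((k+l)*z2*z3 - l*z1*z3 - k*z1*z2)^2 * z4^2
      = 4*(k^2+k*l+l^2)^2*(2*(z1+z2+z3)-1)^2 := by
    have h2' : (e * (((k+l)*z2*z3 - l*z1*z3 - k*z1*z2)/(2*(k^2+k*l+l^2))) * z4)^2
        = (2*(z1+z2+z3) - 1)^2 := by rw [hc]
    rw [mul_pow, mul_pow, div_pow, he, one_mul] at h2'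
    rw [div_mul_eq_mul_div, div_eq_iff (pow_ne_zero 2 (mul_ne_zero two_ne_zero hD0))] at h2'
    linear_combination h2'
  rw [← sub_nonneg]
  have hTid : (((k+l)*z2*z3)^2 + (l*z1*z3)^2 + (k*z1*z2)^2)*z4^2/(k^2+k*l+l^2)^2
      + (z1^2+z2^2+z3^2) - 6*(z1*z2+z1*z3+z2*z3) - 4/3*(3*(z1+z2+z3)-2)
      = (((k+l)*z2*z3)^2 + (l*z1*z3)^2 + (k*z1*z2)^2)*z4^2/(k^2+k*l+l^2)^2
      + (4*(z1^2+z2^2+z3^2) - 3*(z1+z2+z3)^2 - 4*(z1+z2+z3) + 8/3) := by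
    ring
  rw [hTid]
  set Dl := k^2+k*l+l^2 with hDl
  set M := ((k+l)*z2*z3)^2 + (l*z1*z3)^2 + (k*z1*z2)^2 with hM
  set m := (k+l)*z2*z3 - l*z1*z3 - k*z1*z2 with hm
  set w := 2*(z1+z2+z3)-1 with hw
  set T := 4*(z1^2+z2^2+z3^2) - 3*(z1+z2+z3)^2 - 4*(z1+z2+z3) + 8/3 with hT
  have hMnn : 0 ≤ M := by rw [hM]; positivity
  clear_value Dl M m w T
  rcases eq_or_ne m 0 with hm0 | hm0
  · -- m = 0 forces w = 0
    have hw0 : w = 0 := by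
      have h4 : 4*Dl^2*w^2 = 0 := by rw [← hsq, hm0]; ring
      have hD2 : (0:ℝ) < 4*Dl^2 := by positivity
      have : w^2 = 0 := by
        rcases mul_eq_zero.mp h4 with h | h
        · exact absurd h (ne_of_gt hD2)
        · exact h
      exact pow_eq_zero_iff (by norm_num) |>.mp this
    have hTnn : 0 ≤ T := by
      rw [hT]
      have hS : z1+z2+z3 = 1/2 := by rw [hw] at hw0; linarith
      nlinarith [sq_nonneg (z1-z2), sq_nonneg (z1-z3), sq_nonneg (z2-z3)]
    have : 0 ≤ M*z4^2/Dl^2 := by positivity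
    linarith
  · have e1 : M*z4^2/Dl^2 = 4*M*w^2/m^2 := by
      rw [div_eq_div_iff (pow_ne_zero 2 hD0) (pow_ne_zero 2 hm0)]
      linear_combination M * hsq
    rw [e1]
    have e2 : (4*M*w^2 + m^2*T)/m^2 = 4*M*w^2/m^2 + T := by
      field_simp
    have e3 : 0 ≤ (4*M*w^2 + m^2*T)/m^2 := div_nonneg hP (sq_nonneg m)
    rw [e2] at e3
    exact e3

end BInvariantAux

open Spin7 in
/-- Lemma 5.1: the sets ℬ^± are invariant. -/
theorem B_invariant
    (k l : ℕ) (hk : 0 < k) (hl : 0 < l) (hkl : Nat.Coprime k l)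
    (ε : ℝ) (hε : ε = 1 ∨ ε = -1)
    (a b : ℝ) (hab : a ≤ b) (x : ℝ → Fin 8 → ℝ)
    (hsol : IsSolutionOn k l x a b)
    (hspin : ∀ η ∈ Set.Icc a b,
      0 ≤ x η 4 ∧ 0 ≤ x η 5 ∧ 0 ≤ x η 6 ∧ 0 ≤ x η 7 ∧
      x η 0 = x η 5 + x η 6 - x η 4
        - ε * (((k : ℝ) + l)/(2*Δ k l)) * x η 5 * x η 6 * x η 7 ∧
      x η 1 = x η 6 + x η 4 - x η 5
        + ε * ((l : ℝ)/(2*Δ k l)) * x η 4 * x η 6 * x η 7 ∧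
      x η 2 = x η 4 + x η 5 - x η 6
        + ε * ((k : ℝ)/(2*Δ k l)) * x η 4 * x η 5 * x η 7 ∧
      x η 3 = ε * ((((k : ℝ) + l) * x η 5 * x η 6 - (l : ℝ) * x η 4 * x η 6
        - (k : ℝ) * x η 4 * x η 5)/(2*Δ k l)) * x η 7 ∧
      2*(x η 4 + x η 5 + x η 6) - x η 3 = 1)
    (hstart : 0 ≤ x a 3 - x a 0 - x a 1 - x a 2) :
    ∀ η ∈ Set.Icc a b, 0 ≤ x η 3 - x η 0 - x η 1 - x η 2 := by
  have he2 : ε^2 = 1 := by rcases hε with h | h <;> rw [h] <;> norm_num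
  have hkR : (0:ℝ) < k := by exact_mod_cast hk
  have hlR : (0:ℝ) < l := by exact_mod_cast hl
  have hΔpos : (0:ℝ) < (k:ℝ)^2+(k:ℝ)*(l:ℝ)+(l:ℝ)^2 := by positivity
  set φ : ℝ → ℝ := fun t => x t 3 - x t 0 - x t 1 - x t 2 with hφdef
  set DD : ℝ → ℝ := fun t => R4 k l (x t) - R1 k l (x t) - R2 k l (x t) - R3 k l (x t)
    with hDDdef
  -- derivative of φ
  have hderiv : ∀ t ∈ Set.Icc a b,
      HasDerivAt φ ((G (x t) - 1) * φ t + DD t) t := by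
    intro t ht
    have hx := hasDerivAt_pi.mp (hsol t ht)
    have h0 := hx 0; have h1 := hx 1; have h2 := hx 2; have h3 := hx 3
    have hφd : HasDerivAt φ
        (F k l (x t) 3 - F k l (x t) 0 - F k l (x t) 1 - F k l (x t) 2) t :=
      ((h3.sub h0).sub h1).sub h2
    have e0 : F k l (x t) 0 = x t 0 * (G (x t) - 1) + R1 k l (x t) := rfl
    have e1 : F k l (x t) 1 = x t 1 * (G (x t) - 1) + R2 k l (x t) := rfl
    have e2 : F k l (x t) 2 = x t 2 * (G (x t) - 1) + R3 k l (x t) := rfl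
    have e3 : F k l (x t) 3 = x t 3 * (G (x t) - 1) + R4 k l (x t) := rfl
    rw [e0, e1, e2, e3] at hφd
    convert hφd using 1
    simp only [hφdef, hDDdef]
    ring
  -- pointwise inequality DD ≥ 4/3 φ
  have hDDge : ∀ t ∈ Set.Icc a b, 4/3 * φ t ≤ DD t := by
    intro t ht
    obtain ⟨hz1, hz2, hz3, hz4, hx0, hx1, hx2, hx3, hcon⟩ := hspin t ht
    have hΔ' : Δ k l = (k:ℝ)^2+(k:ℝ)*(l:ℝ)+(l:ℝ)^2 := rfl
    have hc : ε * ((((k:ℝ)+l)*(x t 5)*(x t 6) - (l:ℝ)*(x t 4)*(x t 6)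
        - (k:ℝ)*(x t 4)*(x t 5))/(2*((k:ℝ)^2+(k:ℝ)*(l:ℝ)+(l:ℝ)^2))) * x t 7
        = 2*(x t 4 + x t 5 + x t 6) - 1 := by
      rw [← hΔ']; rw [← hx3]; linarith
    have halg := keyalg (k:ℝ) (l:ℝ) ε (x t 4) (x t 5) (x t 6) (x t 7)
      hΔpos he2 hz1 hz2 hz3 hc
    have hφval : φ t = 3*(x t 4 + x t 5 + x t 6) - 2 := by
      have hΔ0 : (2*Δ k l) ≠ 0 := by rw [hΔ']; positivity
      have hsum : x t 0 + x t 1 + x t 2 = (x t 4 + x t 5 + x t 6) - x t 3 := by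
        rw [hx0, hx1, hx2, hx3]
        field_simp
        ring
      simp only [hφdef]
      linarith
    have hDDval : DD t = ((((k:ℝ)+l)*(x t 5)*(x t 6))^2 + ((l:ℝ)*(x t 4)*(x t 6))^2
        + ((k:ℝ)*(x t 4)*(x t 5))^2) * (x t 7)^2/((k:ℝ)^2+(k:ℝ)*(l:ℝ)+(l:ℝ)^2)^2
        + ((x t 4)^2+(x t 5)^2+(x t 6)^2)
        - 6*((x t 4)*(x t 5)+(x t 4)*(x t 6)+(x t 5)*(x t 6)) := by
      simp only [hDDdef, R1, R2, R3, R4, hΔ']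
      field_simp
      ring
    rw [hφval, hDDval]
    calc 4/3 * (3*(x t 4 + x t 5 + x t 6) - 2)
        ≤ ((((k:ℝ)+l)*(x t 5)*(x t 6))^2 + ((l:ℝ)*(x t 4)*(x t 6))^2
          + ((k:ℝ)*(x t 4)*(x t 5))^2) * (x t 7)^2/((k:ℝ)^2+(k:ℝ)*(l:ℝ)+(l:ℝ)^2)^2
          + ((x t 4)^2+(x t 5)^2+(x t 6)^2)
          - 6*((x t 4)*(x t 5)+(x t 4)*(x t 6)+(x t 5)*(x t 6)) := by
          convert halg using 2 <;> ring
      _ = _ := rfl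
  -- continuity
  have hxc : ∀ i, ContinuousOn (fun t => x t i) (Set.Icc a b) := by
    intro i
    intro t ht
    exact ((continuous_apply i).continuousAt.comp
      (hsol t ht).continuousAt).continuousWithinAt
  have hucont : ContinuousOn (fun t => G (x t) + 1/3) (Set.Icc a b) := by
    simp only [G]
    exact ((((continuousOn_const.mul ((hxc 0).pow 2)).add
      (continuousOn_const.mul ((hxc 1).pow 2))).add
      (continuousOn_const.mul ((hxc 2).pow 2))).add ((hxc 3).pow 2)).add continuousOn_const
  obtain ⟨K, hK⟩ := isCompact_Icc.exists_bound_of_continuousOn hucont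
  have hKb : ∀ t ∈ Set.Icc a b, G (x t) + 1/3 ≤ K := by
    intro t ht
    have := hK t ht
    rw [Real.norm_eq_abs] at this
    exact (le_abs_self _).trans this
  -- main invariance argument
  intro t0 ht0
  by_contra hneg
  push_neg at hneg
  have hsubI : Set.Icc a t0 ⊆ Set.Icc a b := Set.Icc_subset_Icc le_rfl ht0.2
  have hφcont : ContinuousOn φ (Set.Icc a b) :=
    fun t ht => ((hderiv t ht).continuousAt).continuousWithinAt
  set E := {t | t ∈ Set.Icc a t0 ∧ 0 ≤ φ t} with hE
  have hEsub : E ⊆ Set.Icc a t0 := fun t ht => ht.1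
  have haE : a ∈ E := ⟨⟨le_refl a, ht0.1⟩, hstart⟩
  have hEeq : E = Set.Icc a t0 ∩ φ ⁻¹' (Set.Ici 0) := by
    ext t; simp [hE, Set.mem_preimage, and_comm]
  have hclosed : IsClosed E := by
    rw [hEeq]
    exact ContinuousOn.preimage_isClosed_of_isClosed
      (hφcont.mono hsubI) isClosed_Icc isClosed_Ici
  have hcpt : IsCompact E := isCompact_Icc.of_isClosed_subset hclosed hEsub
  have hsE : sSup E ∈ E := hcpt.sSup_mem ⟨a, haE⟩
  set s := sSup E with hs
  have hs0 : 0 ≤ φ s := hsE.2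
  have has : a ≤ s := hsE.1.1
  have hst0 : s ≤ t0 := hsE.1.2
  have hslt : s < t0 := by
    rcases lt_or_eq_of_le hst0 with h | h
    · exact h
    · exact absurd (h ▸ hs0) (not_le.mpr hneg)
  have hnegIoc : ∀ t ∈ Set.Ioc s t0, φ t < 0 := by
    intro t ht
    by_contra h
    push_neg at h
    have htE : t ∈ E := ⟨⟨has.trans ht.1.le, ht.2⟩, h⟩
    exact absurd (le_csSup hcpt.bddAbove htE) (not_le.mpr ht.1)
  have hsub2 : Set.Icc s t0 ⊆ Set.Icc a b :=
    Set.Icc_subset_Icc has ht0.2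
  set g : ℝ → ℝ := fun t => φ t * Real.exp (-K * t) with hg
  have hgmono : MonotoneOn g (Set.Icc s t0) := by
    apply monotoneOn_of_deriv_nonneg (convex_Icc s t0)
    · exact ((hφcont.mono hsub2).mul
        ((Real.continuous_exp.comp (continuous_const.mul continuous_id)).continuousOn))
    · intro t ht
      rw [interior_Icc] at ht
      have htab : t ∈ Set.Icc a b := hsub2 ⟨ht.1.le, ht.2.le⟩
      have hlin : HasDerivAt (fun u : ℝ => -K*u) (-K) t := by
        simpa using (hasDerivAt_id t).const_mul (-K)
      exact (((hderiv t htab).mul hlin.exp).differentiableAt).differentiableWithinAt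
    · intro t ht
      rw [interior_Icc] at ht
      have htab : t ∈ Set.Icc a b := hsub2 ⟨ht.1.le, ht.2.le⟩
      have hlin : HasDerivAt (fun u : ℝ => -K*u) (-K) t := by
        simpa using (hasDerivAt_id t).const_mul (-K)
      have hgd : HasDerivAt g
          (((G (x t) - 1) * φ t + DD t) * Real.exp (-K*t)
            + φ t * (Real.exp (-K*t) * (-K))) t :=
        (hderiv t htab).mul hlin.exp
      rw [hgd.deriv]
      have hφt : φ t < 0 := hnegIoc t ⟨ht.1, ht.2.le⟩
      have hDt := hDDge t htab
      have hKt := hKb t htab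
      have hfac : ((G (x t) - 1) * φ t + DD t) * Real.exp (-K*t)
          + φ t * (Real.exp (-K*t) * (-K))
          = (((G (x t) + 1/3 - K) * φ t) + (DD t - 4/3 * φ t)) * Real.exp (-K*t) := by
        ring
      rw [hfac]
      apply mul_nonneg _ (Real.exp_nonneg _)
      have h1 : 0 ≤ (G (x t) + 1/3 - K) * φ t :=
        mul_nonneg_of_nonpos_of_nonpos (by linarith) hφt.le
      linarith
  have hle : g s ≤ g t0 := hgmono ⟨le_refl s, hslt.le⟩ ⟨hslt.le, le_refl t0⟩ hslt.le
  have hgs : 0 ≤ g s := mul_nonneg hs0 (Real.exp_nonneg _)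
  have hgt0 : g t0 < 0 := mul_neg_of_neg_of_pos hneg (Real.exp_pos _)
  linarith
end
end
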